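/- arXiv:2604.03782 — 11 statements merged into one kernel-verified Lean document; each statement's English description precedes it below -/
import Mathlib

section
/- Under the stated assumptions and parameter schedules, for every t ≥ 1 the squared gradient norm at the last iterate satisfies ‖G(z_t)‖² ≤ C/t, where C = K²(E + γD)², D = (√12 + 1)‖z_0 − z*‖, and E = max(‖z_2 − z_1‖(1 + γ), 20γD). -/
open scoped RealInnerProductSpace

/-
Expanding `‖z (t + 1) - zstar‖²` around the convex combination `(1 - β t) z t + β t z 0`,
monotonicity at `zstar` lets one drop the cross term with `z t - zstar`, and the other gradient terms
are small enough (`α t K = 1 / √(t + γ)` and `2 (α t K)² ≤ β t`) for the ball of radius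
`√12 ‖z 0 - zstar‖` around `zstar` to be invariant. For the successive differences,
`z (t + 2) - z (t + 1)` is `(1 - β (t + 1)) (z (t + 1) - z t) - α (t + 1) (G (z (t + 1)) - G (z t))`
plus a drift caused by the change of the step sizes. Monotonicity and the Lipschitz bound shrink the
first part by a factor of about `1 - (γ - 1/2) / (t + γ)`, which beats both the drift and the
required decay once `t + γ ≥ (19 γ)²`, so `‖z (t + 1) - z t‖ ≤ E / (t + γ)` propagates; for smaller
`t` this bound follows from the boundedness of the iterates alone. Finally
`α t ‖G (z t)‖ ≤ ‖z (t + 1) - z t‖ + β t ‖z 0 - z t‖ = O(1 / t)`.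
-/

lemma sq_le_twelve_mul_sq {a b c β : ℝ} (ha : 0 ≤ a) (hab : a ≤ √12 * b) (hc : 0 ≤ c)
    (hcβ : 2 * c ^ 2 ≤ β) (hβ₁ : β ≤ 1) :
    ((1 - β) * a + β * b) ^ 2 + 2 * c * β * (b * a) + c ^ 2 * a ^ 2 ≤ 12 * b ^ 2 := by
  have hM : √12 ^ 2 = 12 := Real.sq_sqrt (by norm_num)
  have hM0 : 0 ≤ √12 := Real.sqrt_nonneg _
  have hM3 : 3 ≤ √12 := by nlinarith
  have hb : 0 ≤ b := by nlinarith
  have hβ : 0 ≤ β := by nlinarith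
  have hcM : c * √12 ≤ 5 / 2 := by nlinarith [sq_nonneg (c * √12)]
  have h1 : ((1 - β) * a + β * b) ^ 2 ≤ (12 - 11 * β) * b ^ 2 := by
    have h : (1 - β) * a + β * b ≤ ((1 - β) * √12 + β) * b := by nlinarith
    calc ((1 - β) * a + β * b) ^ 2 ≤ (((1 - β) * √12 + β) * b) ^ 2 :=
          pow_le_pow_left₀ (by nlinarith) h 2
      _ ≤ (12 - 11 * β) * b ^ 2 := by
          have : ((1 - β) * √12 + β) ^ 2 ≤ 12 - 11 * β := by
            nlinarith [mul_nonneg (mul_nonneg hβ (sub_nonneg.2 hβ₁)) (sq_nonneg (√12 - 1))]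
          nlinarith [mul_le_mul_of_nonneg_right this (sq_nonneg b)]
  have h2 : 2 * c * β * (b * a) ≤ 5 * β * b ^ 2 := by
    nlinarith [mul_le_mul_of_nonneg_left hab (mul_nonneg (mul_nonneg hc hβ) hb),
      mul_nonneg hβ (sq_nonneg b)]
  have h3 : c ^ 2 * a ^ 2 ≤ 6 * β * b ^ 2 := by
    have : a ^ 2 ≤ 12 * b ^ 2 := by nlinarith
    nlinarith [mul_le_mul_of_nonneg_left this (sq_nonneg c), sq_nonneg b]
  linarith

lemma inv_sqrt_sub_inv_sqrt_add_one_le {s : ℝ} (hs : 0 < s) :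
    1 / √s - 1 / √(s + 1) ≤ 1 / (2 * s * √s) := by
  have ha : 0 < √s := Real.sqrt_pos.2 hs
  have hb : 0 < √(s + 1) := Real.sqrt_pos.2 (by linarith)
  have ha2 : √s ^ 2 = s := Real.sq_sqrt hs.le
  have hb2 : √(s + 1) ^ 2 = s + 1 := Real.sq_sqrt (by linarith)
  have hab : √s ≤ √(s + 1) := Real.sqrt_le_sqrt (by linarith)
  rw [div_sub_div _ _ ha.ne' hb.ne', div_le_div_iff₀ (by positivity) (by positivity)]
  have hcub : 2 * √s ^ 3 ≤ √s * √(s + 1) * (√s + √(s + 1)) := by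
    nlinarith [mul_le_mul_of_nonneg_left hab (mul_pos ha ha).le,
      mul_le_mul_of_nonneg_left hab (mul_pos ha hb).le]
  calc (1 * √(s + 1) - √s * 1) * (2 * s * √s) = (√(s + 1) - √s) * (2 * √s ^ 3) := by
        linear_combination (2 * √s * (√(s + 1) - √s)) * ha2.symm
    _ ≤ (√(s + 1) - √s) * (√s * √(s + 1) * (√s + √(s + 1))) :=
        mul_le_mul_of_nonneg_left hcub (sub_nonneg.2 hab)
    _ = 1 * (√s * √(s + 1)) := by linear_combination (√s * √(s + 1)) * (hb2 - ha2)

lemma contraction_term_le {γ s u E : ℝ} (hγ : 2 ≤ γ) (hs : 0 < s) (hγs : 4 * γ ≤ s + 1)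
    (hu : 0 ≤ u) (huE : u * s ≤ E) :
    ((1 - γ / (s + 1)) ^ 2 + 1 / (s + 1)) * u ^ 2 + E ^ 2 / ((s + 1) * s ^ 2) / 2
      ≤ (E / (s + 1)) ^ 2 := by
  have hus : (u * s) ^ 2 ≤ E ^ 2 := pow_le_pow_left₀ (by positivity) huE 2
  have key : (s + 1 - γ) ^ 2 + 3 / 2 * (s + 1) ≤ s ^ 2 := by nlinarith
  have e : ((1 - γ / (s + 1)) ^ 2 + 1 / (s + 1)) * u ^ 2 + E ^ 2 / ((s + 1) * s ^ 2) / 2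
      = (((s + 1 - γ) ^ 2 + (s + 1)) * (u * s) ^ 2 + (s + 1) / 2 * E ^ 2)
        / ((s + 1) ^ 2 * s ^ 2) := by
    field_simp
  rw [e, div_le_iff₀ (by positivity)]
  have e2 : (E / (s + 1)) ^ 2 * ((s + 1) ^ 2 * s ^ 2) = E ^ 2 * s ^ 2 := by field_simp
  rw [e2]
  nlinarith [mul_le_mul_of_nonneg_left hus (by positivity : (0 : ℝ) ≤ (s + 1 - γ) ^ 2 + (s + 1)),
    mul_le_mul_of_nonneg_left key (sq_nonneg E)]

lemma perturbation_terms_le {γ s σ D E u v : ℝ} (hγ : 2 ≤ γ) (hs : 0 < s)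
    (hσ : σ ^ 2 = s + 1) (hσγ : 19 * γ ≤ σ) (hD : 0 ≤ D) (hE : 20 * γ * D ≤ E)
    (hu : 0 ≤ u) (huE : u * s ≤ E) (hv : 0 ≤ v) (hvE : 2 * s ^ 2 * v ≤ E + γ * D) :
    2 * (γ / s * D * v + (γ / s - γ / (s + 1)) * u * D
        + 1 / σ * u * ((γ / s - γ / (s + 1)) * D + v))
      + ((γ / s - γ / (s + 1)) * D + v) ^ 2 ≤ E ^ 2 / ((s + 1) * s ^ 2) / 2 := by
  have hp : γ / s - γ / (s + 1) = γ / (s * (s + 1)) := by field_simp; ring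
  rw [hp]
  set Q := γ / (s * (s + 1)) * D + v
  set W := (s + 1) * s ^ 2
  have hQ0 : 0 ≤ Q := by positivity
  have hσ38 : 38 ≤ σ := by linarith
  have hs121 : 121 ≤ s + 1 := by nlinarith
  have hE0 : 0 ≤ E := by nlinarith
  have hγD : γ * D ≤ E / 20 := by linarith
  have hvs : v * (s * (s + 1)) ≤ 21 / 20 * E := by nlinarith
  have hQ : Q * (s * (s + 1)) ≤ 11 / 10 * E := by
    have : Q * (s * (s + 1)) = γ * D + v * (s * (s + 1)) := by simp only [Q]; field_simp
    linarith
  have hA : γ / s * D * v * W ≤ 21 / 400 * E ^ 2 := by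
    have : γ / s * D * v * W = (γ * D) * (v * (s * (s + 1))) := by simp only [W]; field_simp
    rw [this]
    nlinarith [mul_le_mul hγD hvs (by positivity) (by positivity)]
  have hB : γ / (s * (s + 1)) * u * D * W ≤ 1 / 20 * E ^ 2 := by
    have : γ / (s * (s + 1)) * u * D * W = (u * s) * (γ * D) := by simp only [W]; field_simp
    rw [this]
    nlinarith [mul_le_mul huE hγD (by positivity) hE0]
  have hC : 1 / σ * u * Q * W ≤ 11 / 380 * E ^ 2 := by
    have : 1 / σ * u * Q * W = (u * s) * (Q * (s * (s + 1))) / σ := by simp only [W]; ring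
    rw [this, div_le_iff₀ (by linarith)]
    nlinarith [mul_le_mul huE hQ (by positivity) hE0, sq_nonneg E]
  have hQ2 : Q ^ 2 * W ≤ 1 / 100 * E ^ 2 := by
    have h1 : Q ^ 2 * W * (s + 1) ≤ 121 / 100 * E ^ 2 := by
      have : Q ^ 2 * W * (s + 1) = (Q * (s * (s + 1))) ^ 2 := by simp only [W]; ring
      rw [this]
      nlinarith [pow_le_pow_left₀ (by positivity) hQ 2]
    nlinarith [mul_le_mul_of_nonneg_left hs121 (by positivity : 0 ≤ Q ^ 2 * W)]
  rw [div_div, le_div_iff₀ (by positivity)]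
  have e : (2 * (γ / s * D * v + γ / (s * (s + 1)) * u * D + 1 / σ * u * Q) + Q ^ 2) * (W * 2)
      = 2 * (2 * (γ / s * D * v * W + γ / (s * (s + 1)) * u * D * W + 1 / σ * u * Q * W)
        + Q ^ 2 * W) := by ring
  rw [e]
  linarith [sq_nonneg E]

section AnchoredGDA

variable {H : Type*} [NormedAddCommGroup H] [InnerProductSpace ℝ H]

def anchoredStep (G : H → H) (z₀ : H) (α β : ℝ) (z : H) : H :=
  z - α • G z + β • (z₀ - z)

variable {G : H → H} {z₀ x y zstar : H} {z : ℕ → H} {α β α' β' K γ s D E : ℝ}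

lemma anchoredStep_sub_self : anchoredStep G z₀ α β x - x = β • (z₀ - x) - α • G x := by
  unfold anchoredStep; abel

lemma norm_anchoredStep_sub_self_le (hα : 0 ≤ α) (hβ : 0 ≤ β) :
    ‖anchoredStep G z₀ α β x - x‖ ≤ α * ‖G x‖ + β * ‖z₀ - x‖ := by
  rw [anchoredStep_sub_self, add_comm]
  refine (norm_sub_le _ _).trans_eq ?_
  rw [norm_smul, norm_smul, Real.norm_of_nonneg hα, Real.norm_of_nonneg hβ]

lemma mul_norm_apply_le_norm_anchoredStep_sub_self_add (hα : 0 ≤ α) (hβ : 0 ≤ β) :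
    α * ‖G x‖ ≤ ‖anchoredStep G z₀ α β x - x‖ + β * ‖z₀ - x‖ := by
  have h : α • G x = β • (z₀ - x) - (anchoredStep G z₀ α β x - x) := by
    rw [anchoredStep_sub_self]; abel
  calc α * ‖G x‖ = ‖α • G x‖ := by rw [norm_smul, Real.norm_of_nonneg hα]
    _ ≤ ‖β • (z₀ - x)‖ + ‖anchoredStep G z₀ α β x - x‖ := h ▸ norm_sub_le _ _
    _ = _ := by rw [norm_smul, Real.norm_of_nonneg hβ, add_comm]

lemma inner_anchoredStep_sub_self_le (hα : 0 ≤ α) (hβ : 0 ≤ β) :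
    ⟪anchoredStep G z₀ α β x - x, G x⟫ ≤ β * (‖z₀ - x‖ * ‖G x‖) := by
  rw [anchoredStep_sub_self, inner_sub_left, real_inner_smul_left, real_inner_smul_left,
    real_inner_self_eq_norm_sq]
  have := real_inner_le_norm (z₀ - x) (G x)
  nlinarith [mul_nonneg hα (sq_nonneg ‖G x‖)]

lemma norm_anchoredStep_sub_sq_le (hα : 0 ≤ α) (hβ : 0 ≤ β) (hβ₁ : β ≤ 1)
    (hmono : 0 ≤ ⟪G x, x - zstar⟫) (hlip : ‖G x‖ ≤ K * ‖x - zstar‖) :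
    ‖anchoredStep G z₀ α β x - zstar‖ ^ 2 ≤
      ((1 - β) * ‖x - zstar‖ + β * ‖z₀ - zstar‖) ^ 2
        + 2 * (α * K) * β * (‖z₀ - zstar‖ * ‖x - zstar‖)
        + (α * K) ^ 2 * ‖x - zstar‖ ^ 2 := by
  set p := (1 - β) • (x - zstar) + β • (z₀ - zstar)
  have hdecomp : anchoredStep G z₀ α β x - zstar = p - α • G x := by
    unfold anchoredStep; module
  have hp : ‖p‖ ≤ (1 - β) * ‖x - zstar‖ + β * ‖z₀ - zstar‖ := by
    refine (norm_add_le _ _).trans_eq ?_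
    rw [norm_smul, norm_smul, Real.norm_of_nonneg (by linarith), Real.norm_of_nonneg hβ]
  have hinner : -⟪p, α • G x⟫ ≤ (α * K) * β * (‖z₀ - zstar‖ * ‖x - zstar‖) := by
    have hpG : ⟪p, α • G x⟫ = α * ((1 - β) * ⟪G x, x - zstar⟫ + β * ⟪z₀ - zstar, G x⟫) := by
      simp only [p, inner_add_left, real_inner_smul_left, real_inner_smul_right,
        real_inner_comm (G x) (x - zstar)]
      ring
    have h0 := neg_le_of_abs_le (abs_real_inner_le_norm (z₀ - zstar) (G x))
    have hαβ : 0 ≤ α * β := mul_nonneg hα hβ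
    rw [hpG]
    nlinarith [mul_nonneg (mul_nonneg hα (sub_nonneg.2 hβ₁)) hmono,
      mul_le_mul_of_nonneg_left hlip (mul_nonneg hαβ (norm_nonneg (z₀ - zstar)))]
  have hαG : ‖α • G x‖ ≤ α * K * ‖x - zstar‖ := by
    rw [norm_smul, Real.norm_of_nonneg hα, mul_assoc]
    exact mul_le_mul_of_nonneg_left hlip hα
  rw [hdecomp, norm_sub_sq_real]
  nlinarith [pow_le_pow_left₀ (norm_nonneg _) hp 2, pow_le_pow_left₀ (norm_nonneg _) hαG 2]

theorem norm_sub_le_sqrt_twelve_mul (hK : 0 < K) (hγ : 2 ≤ γ)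
    (hmono : ∀ u w, 0 ≤ ⟪G u - G w, u - w⟫) (hlip : ∀ u w, ‖G u - G w‖ ≤ K * ‖u - w‖)
    (hzstar : G zstar = 0)
    (hz : ∀ t : ℕ, z (t + 1) = anchoredStep G (z 0) (1 / (K * √(t + γ))) (γ / (t + γ)) (z t))
    (t : ℕ) : ‖z t - zstar‖ ≤ √12 * ‖z 0 - zstar‖ := by
  induction t with
  | zero =>
    exact le_mul_of_one_le_left (norm_nonneg _) (Real.one_le_sqrt.2 (by norm_num))
  | succ t ih =>
    have hs : 0 < (t : ℝ) + γ := by positivity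
    have hβ₁ : γ / (t + γ) ≤ 1 := div_le_one_of_le₀ (by linarith [t.cast_nonneg (α := ℝ)]) hs.le
    have hc : 1 / (K * √(t + γ)) * K = 1 / √(t + γ) := by field_simp
    have hcβ : 2 * (1 / √(t + γ)) ^ 2 ≤ γ / (t + γ) := by
      rw [div_pow, one_pow, Real.sq_sqrt hs.le, mul_one_div]
      gcongr
    have hmono' : 0 ≤ ⟪G (z t), z t - zstar⟫ := by simpa [hzstar] using hmono (z t) zstar
    have hlip' : ‖G (z t)‖ ≤ K * ‖z t - zstar‖ := by simpa [hzstar] using hlip (z t) zstar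
    have h := norm_anchoredStep_sub_sq_le (z₀ := z 0) (α := 1 / (K * √(t + γ)))
      (by positivity) (by positivity) hβ₁ hmono' hlip'
    rw [hc, ← hz] at h
    refine (pow_le_pow_iff_left₀ (norm_nonneg _) (by positivity) two_ne_zero).1 ?_
    rw [mul_pow, Real.sq_sqrt (by norm_num)]
    exact h.trans (sq_le_twelve_mul_sq (norm_nonneg _) ih (by positivity) hcβ hβ₁)

lemma anchoredStep_sub_anchoredStep (hy : y = anchoredStep G z₀ α β x) :
    anchoredStep G z₀ α' β' y - y =
      ((1 - β') • (y - x) - α' • (G y - G x)) + ((β - β') • (x - z₀) + (α - α') • G x) := by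
  have h := (anchoredStep_sub_self (G := G) (z₀ := z₀) (α := α) (β := β) (x := x))
  rw [← hy] at h
  rw [anchoredStep_sub_self]
  linear_combination (norm := module) -h

lemma norm_smul_sub_smul_sq_le {d e : H} {a b : ℝ} (hde : 0 ≤ ⟪d, e⟫) (he : ‖e‖ ≤ K * ‖d‖)
    (ha : 0 ≤ a) (hb : 0 ≤ b) :
    ‖a • d - b • e‖ ^ 2 ≤ (a ^ 2 + (b * K) ^ 2) * ‖d‖ ^ 2 := by
  rw [norm_sub_sq_real, norm_smul, norm_smul, real_inner_smul_left, real_inner_smul_right,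
    Real.norm_of_nonneg ha, Real.norm_of_nonneg hb]
  nlinarith [mul_nonneg (mul_nonneg ha hb) hde,
    mul_le_mul_of_nonneg_left (pow_le_pow_left₀ (norm_nonneg e) he 2) (sq_nonneg b)]

lemma norm_smul_add_smul_le_of_norm_le {u w : H} {a b : ℝ} (ha : 0 ≤ a) (hb : 0 ≤ b)
    (hu : ‖u‖ ≤ D) : ‖a • u + b • w‖ ≤ a * D + b * ‖w‖ := by
  refine (norm_add_le _ _).trans ?_
  rw [norm_smul, norm_smul, Real.norm_of_nonneg ha, Real.norm_of_nonneg hb]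
  gcongr

lemma inner_anchoredStep_sub_anchoredStep_le (hy : y = anchoredStep G z₀ α β x)
    (hlip : ‖G y - G x‖ ≤ K * ‖y - x‖) (hα' : 0 ≤ α') (hα'α : α' ≤ α) (hβ' : 0 ≤ β')
    (hβ'₁ : β' ≤ 1) (hβ'β : β' ≤ β) (hxD : ‖z₀ - x‖ ≤ D) :
    ⟪(1 - β') • (y - x) - α' • (G y - G x), (β - β') • (x - z₀) + (α - α') • G x⟫ ≤
      β * D * ((α - α') * ‖G x‖) + (β - β') * ‖y - x‖ * D
        + α' * K * ‖y - x‖ * ((β - β') * D + (α - α') * ‖G x‖) := by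
  set d := y - x
  set Δ := G y - G x
  set q := (β - β') • (x - z₀) + (α - α') • G x
  have hD : 0 ≤ D := (norm_nonneg _).trans hxD
  have hq := norm_smul_add_smul_le_of_norm_le (w := G x) (sub_nonneg.2 hβ'β)
    (sub_nonneg.2 hα'α) (norm_sub_rev x z₀ ▸ hxD)
  have hdw : ⟪d, x - z₀⟫ ≤ ‖d‖ * D := (real_inner_le_norm _ _).trans <|
    mul_le_mul_of_nonneg_left (norm_sub_rev x z₀ ▸ hxD) (norm_nonneg _)
  have hdg : ⟪d, G x⟫ ≤ β * (D * ‖G x‖) := (hy ▸ inner_anchoredStep_sub_self_le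
    (by linarith) (by linarith)).trans (by gcongr; linarith)
  have hΔq : -(α' * ⟪Δ, q⟫) ≤ α' * K * ‖d‖ * ((β - β') * D + (α - α') * ‖G x‖) := by
    have := neg_le_of_abs_le (abs_real_inner_le_norm Δ q)
    have := mul_le_mul hlip hq (norm_nonneg _) ((norm_nonneg _).trans hlip)
    nlinarith
  have hsplit : ⟪(1 - β') • d - α' • Δ, q⟫ = (1 - β') * ((β - β') * ⟪d, x - z₀⟫
      + (α - α') * ⟪d, G x⟫) - α' * ⟪Δ, q⟫ := by
    simp only [q, inner_sub_left, inner_add_right, real_inner_smul_left, real_inner_smul_right]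
    ring
  have hbd : (β - β') * ⟪d, x - z₀⟫ + (α - α') * ⟪d, G x⟫ ≤
      (β - β') * ‖d‖ * D + β * D * ((α - α') * ‖G x‖) := by
    nlinarith [mul_le_mul_of_nonneg_left hdw (sub_nonneg.2 hβ'β),
      mul_le_mul_of_nonneg_left hdg (sub_nonneg.2 hα'α)]
  have h0 : 0 ≤ (β - β') * ‖d‖ * D + β * D * ((α - α') * ‖G x‖) :=
    add_nonneg (mul_nonneg (mul_nonneg (by linarith) (norm_nonneg _)) hD)
      (mul_nonneg (mul_nonneg (by linarith) hD) (mul_nonneg (by linarith) (norm_nonneg _)))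
  rw [hsplit]
  nlinarith [mul_le_mul_of_nonneg_left hbd (sub_nonneg.2 hβ'₁)]

lemma norm_anchoredStep_sub_anchoredStep_sq_le (hy : y = anchoredStep G z₀ α β x)
    (hmono : 0 ≤ ⟪G y - G x, y - x⟫) (hlip : ‖G y - G x‖ ≤ K * ‖y - x‖)
    (hα' : 0 ≤ α') (hα'α : α' ≤ α) (hβ' : 0 ≤ β') (hβ'₁ : β' ≤ 1) (hβ'β : β' ≤ β)
    (hxD : ‖z₀ - x‖ ≤ D) :
    ‖anchoredStep G z₀ α' β' y - y‖ ^ 2 ≤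
      ((1 - β') ^ 2 + (α' * K) ^ 2) * ‖y - x‖ ^ 2
        + 2 * (β * D * ((α - α') * ‖G x‖) + (β - β') * ‖y - x‖ * D
          + α' * K * ‖y - x‖ * ((β - β') * D + (α - α') * ‖G x‖))
        + ((β - β') * D + (α - α') * ‖G x‖) ^ 2 := by
  have hP := norm_smul_sub_smul_sq_le (a := 1 - β') (b := α')
    (real_inner_comm (y - x) _ ▸ hmono) hlip (by linarith) hα'
  have hcross := inner_anchoredStep_sub_anchoredStep_le hy hlip hα' hα'α hβ' hβ'₁ hβ'β hxD
  have hq := norm_smul_add_smul_le_of_norm_le (w := G x) (sub_nonneg.2 hβ'β)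
    (sub_nonneg.2 hα'α) (norm_sub_rev x z₀ ▸ hxD)
  rw [anchoredStep_sub_anchoredStep hy, norm_add_sq_real]
  nlinarith [pow_le_pow_left₀ (norm_nonneg _) hq 2]

lemma norm_apply_le_of_norm_anchoredStep_sub_le (hK : 0 < K) (hs : 0 < s)
    (hγ : 0 ≤ γ) (hyx : ‖anchoredStep G z₀ (1 / (K * √s)) (γ / s) x - x‖ ≤ E / s)
    (hxD : ‖z₀ - x‖ ≤ D) :
    ‖G x‖ ≤ K * (E + γ * D) / √s := by
  have hσ : 0 < √s := Real.sqrt_pos.2 hs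
  have h := mul_norm_apply_le_norm_anchoredStep_sub_self_add (G := G) (z₀ := z₀) (x := x)
    (α := 1 / (K * √s)) (β := γ / s) (by positivity) (by positivity)
  have h2 : 1 / (K * √s) * ‖G x‖ ≤ (E + γ * D) / s := by
    calc _ ≤ E / s + γ / s * D :=
          h.trans (add_le_add hyx (mul_le_mul_of_nonneg_left hxD (by positivity)))
      _ = _ := by ring
  calc ‖G x‖ = K * √s * (1 / (K * √s) * ‖G x‖) := by field_simp
    _ ≤ K * √s * ((E + γ * D) / s) := by gcongr
    _ = K * (E + γ * D) / √s := by
      field_simp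
      rw [Real.sq_sqrt hs.le, mul_comm]

lemma two_mul_sq_mul_step_decrease_le {A g : ℝ} (hK : 0 < K) (hs : 0 < s) (hg0 : 0 ≤ g)
    (hg : g ≤ K * A / √s) :
    2 * s ^ 2 * ((1 / (K * √s) - 1 / (K * √(s + 1))) * g) ≤ A := by
  have hgK : g / K ≤ A / √s := by
    rw [div_le_iff₀ hK]
    exact hg.trans_eq (by ring)
  calc 2 * s ^ 2 * ((1 / (K * √s) - 1 / (K * √(s + 1))) * g)
      = 2 * s ^ 2 * ((1 / √s - 1 / √(s + 1)) * (g / K)) := by field_simp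
    _ ≤ 2 * s ^ 2 * (1 / (2 * s * √s) * (A / √s)) := by
      gcongr
      exact inv_sqrt_sub_inv_sqrt_add_one_le hs
    _ = A := by
      field_simp
      rw [Real.sq_sqrt hs.le]

theorem norm_anchoredStep_sub_le_div_of_le (hK : 0 < K) (hγ : 2 ≤ γ) (hs : 0 < s)
    (hσγ : 19 * γ ≤ √(s + 1)) (hy : y = anchoredStep G z₀ (1 / (K * √s)) (γ / s) x)
    (hmono : 0 ≤ ⟪G y - G x, y - x⟫) (hlip : ‖G y - G x‖ ≤ K * ‖y - x‖)
    (hxD : ‖z₀ - x‖ ≤ D) (hE : 20 * γ * D ≤ E) (hyx : ‖y - x‖ ≤ E / s) :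
    ‖anchoredStep G z₀ (1 / (K * √(s + 1))) (γ / (s + 1)) y - y‖ ≤ E / (s + 1) := by
  set σ := √(s + 1)
  have hσ2 : σ ^ 2 = s + 1 := Real.sq_sqrt (by linarith)
  have hsσ : √s ≤ σ := Real.sqrt_le_sqrt (by linarith)
  have hD : 0 ≤ D := (norm_nonneg _).trans hxD
  have hE0 : 0 ≤ E := le_trans (by positivity) hE
  have hαα' : 1 / (K * σ) ≤ 1 / (K * √s) :=
    one_div_le_one_div_of_le (by positivity) (mul_le_mul_of_nonneg_left hsσ hK.le)
  have hvec := norm_anchoredStep_sub_anchoredStep_sq_le (α' := 1 / (K * σ)) (β' := γ / (s + 1))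
    hy hmono hlip (by positivity) hαα' (by positivity)
    (div_le_one_of_le₀ (by nlinarith) (by linarith))
    (div_le_div_of_nonneg_left (by linarith) hs (by linarith)) hxD
  rw [show 1 / (K * σ) * K = 1 / σ by field_simp, div_pow, one_pow, hσ2] at hvec
  have hus := (le_div_iff₀ hs).1 hyx
  have hGx := norm_apply_le_of_norm_anchoredStep_sub_le hK hs (by linarith) (hy ▸ hyx) hxD
  have hcontr := contraction_term_le hγ hs (by nlinarith) (norm_nonneg _) hus
  have hpert := perturbation_terms_le hγ hs hσ2 hσγ hD hE (norm_nonneg _) hus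
    (mul_nonneg (sub_nonneg.2 hαα') (norm_nonneg _))
    (two_mul_sq_mul_step_decrease_le hK hs (norm_nonneg _) hGx)
  refine (pow_le_pow_iff_left₀ (norm_nonneg _) (by positivity) two_ne_zero).1 ?_
  linarith

theorem norm_anchoredStep_sub_le_div (hK : 0 < K) (hγ : 2 ≤ γ) (hs : 0 < s)
    (hy : y = anchoredStep G z₀ (1 / (K * √s)) (γ / s) x)
    (hmono : 0 ≤ ⟪G y - G x, y - x⟫) (hlip : ‖G y - G x‖ ≤ K * ‖y - x‖)
    (hxD : ‖z₀ - x‖ ≤ D) (hyD : ‖z₀ - y‖ ≤ D) (hGy : ‖G y‖ ≤ K * D)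
    (hE : 20 * γ * D ≤ E) (hyx : ‖y - x‖ ≤ E / s) :
    ‖anchoredStep G z₀ (1 / (K * √(s + 1))) (γ / (s + 1)) y - y‖ ≤ E / (s + 1) := by
  rcases le_or_gt (19 * γ) √(s + 1) with hσγ | hσγ
  · exact norm_anchoredStep_sub_le_div_of_le hK hγ hs hσγ hy hmono hlip hxD hE hyx
  -- Before the contraction takes over, the bound on `‖G y‖` alone suffices.
  set σ := √(s + 1)
  have hσ0 : 0 < σ := Real.sqrt_pos.2 (by linarith)
  have hσ2 : σ ^ 2 = s + 1 := Real.sq_sqrt (by linarith)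
  calc _ ≤ 1 / (K * σ) * ‖G y‖ + γ / (s + 1) * ‖z₀ - y‖ :=
        norm_anchoredStep_sub_self_le (by positivity) (by positivity)
    _ ≤ 1 / (K * σ) * (K * D) + γ / (s + 1) * D := by gcongr
    _ = (σ * D + γ * D) / (s + 1) := by rw [← hσ2]; field_simp
    _ ≤ E / (s + 1) := by gcongr; nlinarith [(norm_nonneg _).trans hxD]

theorem norm_succ_sub_le_div (hK : 0 < K) (hγ : 2 ≤ γ)
    (hmono : ∀ u w, 0 ≤ ⟪G u - G w, u - w⟫) (hlip : ∀ u w, ‖G u - G w‖ ≤ K * ‖u - w‖)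
    (hz : ∀ t : ℕ, z (t + 1) = anchoredStep G (z 0) (1 / (K * √(t + γ))) (γ / (t + γ)) (z t))
    (hzD : ∀ t, ‖z 0 - z t‖ ≤ D) (hGD : ∀ t, ‖G (z t)‖ ≤ K * D)
    (hE₁ : ‖z 2 - z 1‖ * (1 + γ) ≤ E) (hE₂ : 20 * γ * D ≤ E) {t : ℕ} (ht : 1 ≤ t) :
    ‖z (t + 1) - z t‖ ≤ E / (t + γ) := by
  induction t, ht using Nat.le_induction with
  | base =>
    rw [le_div_iff₀ (by positivity), Nat.cast_one]
    exact hE₁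
  | succ t ht ih =>
    have hcast : ((t + 1 : ℕ) : ℝ) + γ = (t + γ) + 1 := by push_cast; ring
    rw [hz (t + 1), hcast]
    exact norm_anchoredStep_sub_le_div hK hγ (by positivity) (hz t) (hmono _ _) (hlip _ _)
      (hzD t) (hzD (t + 1)) (hGD (t + 1)) hE₂ ih

end AnchoredGDA

/-- **Anchored GDA last-iterate convergence.** Under monotonicity, `K`-Lipschitzness,
existence of a zero `zstar` of `G`, and the parameter schedules
`α t = 1/(K√(t+γ))`, `β t = γ/(t+γ)` with `γ ≥ 2`, for every `t ≥ 1` the squared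
gradient norm at the last iterate satisfies `‖G(z t)‖² ≤ C / t` with
`C = K²(E + γD)²`, `D = (√12 + 1)‖z 0 − zstar‖`, `E = max (‖z 2 − z 1‖(1+γ)) (20γD)`. -/
theorem anchored_gda_last_iterate
    {H : Type*} [NormedAddCommGroup H] [InnerProductSpace ℝ H]
    (G : H → H) (K : ℝ) (hK : 0 < K)
    (hmono : ∀ z w : H, 0 ≤ ⟪G z - G w, z - w⟫)
    (hlip : ∀ z w : H, ‖G z - G w‖ ≤ K * ‖z - w‖)
    (zstar : H) (hzstar : G zstar = 0)
    (γ : ℝ) (hγ : 2 ≤ γ)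
    (α β : ℕ → ℝ)
    (hα : ∀ t : ℕ, α t = 1 / (K * Real.sqrt ((t : ℝ) + γ)))
    (hβ : ∀ t : ℕ, β t = γ / ((t : ℝ) + γ))
    (z : ℕ → H)
    (hstep : ∀ t : ℕ, z (t + 1) = z t - α t • G (z t) + β t • (z 0 - z t))
    (D E C : ℝ)
    (hD : D = (Real.sqrt 12 + 1) * ‖z 0 - zstar‖)
    (hE : E = max (‖z 2 - z 1‖ * (1 + γ)) (20 * γ * D))
    (hC : C = K ^ 2 * (E + γ * D) ^ 2) :
    ∀ t : ℕ, 1 ≤ t → ‖G (z t)‖ ^ 2 ≤ C / t := by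
  have hz : ∀ t : ℕ, z (t + 1) = anchoredStep G (z 0) (1 / (K * √(t + γ))) (γ / (t + γ)) (z t) :=
    fun t => by rw [hstep, hα, hβ]; rfl
  have hbdd := norm_sub_le_sqrt_twelve_mul hK hγ hmono hlip hzstar hz
  have hzD : ∀ t, ‖z 0 - z t‖ ≤ D := fun t => by
    linarith [norm_sub_le_norm_sub_add_norm_sub (z 0) zstar (z t), norm_sub_rev zstar (z t),
      hbdd t]
  have hGD : ∀ t, ‖G (z t)‖ ≤ K * D := fun t => by
    have h := hlip (z t) zstar
    rw [hzstar, sub_zero] at h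
    refine h.trans (mul_le_mul_of_nonneg_left ((hbdd t).trans ?_) hK.le)
    rw [hD, add_mul, one_mul]
    exact le_add_of_nonneg_right (norm_nonneg _)
  intro t ht
  have hs : 0 < (t : ℝ) + γ := by positivity
  have hG := norm_apply_le_of_norm_anchoredStep_sub_le hK hs (by linarith)
    (hz t ▸ norm_succ_sub_le_div hK hγ hmono hlip hz hzD hGD (hE ▸ le_max_left _ _)
      (hE ▸ le_max_right _ _) ht) (hzD t)
  calc ‖G (z t)‖ ^ 2 ≤ (K * (E + γ * D) / √(t + γ)) ^ 2 := pow_le_pow_left₀ (norm_nonneg _) hG 2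
    _ = C / (t + γ) := by rw [hC, div_pow, Real.sq_sqrt hs.le, mul_pow]
    _ ≤ C / t := div_le_div_of_nonneg_left (hC ▸ by positivity) (Nat.cast_pos.2 ht)
        (by linarith)
end

section
/- For every t ≥ 0, the squared distance of the Anchored GDA iterates to the point z* satisfies ‖z_{t+1} − z*‖² ≤ (1 − β_t + 1.5 α_t² K²) ‖z_t − z*‖² + (β_t + 2β_t²) ‖z_0 − z*‖². -/
open scoped RealInnerProductSpace

/-- **One-step distance estimate for Anchored GDA.** For every `t ≥ 0`,
`‖z (t+1) − zstar‖² ≤ (1 − β t + 1.5 (α t)² K²) ‖z t − zstar‖² + (β t + 2 (β t)²) ‖z 0 − zstar‖²`. -/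
theorem anchored_gda_one_step
    {H : Type*} [NormedAddCommGroup H] [InnerProductSpace ℝ H]
    (G : H → H) (K : ℝ) (hK : 0 < K)
    (hmono : ∀ z w : H, 0 ≤ ⟪G z - G w, z - w⟫)
    (hlip : ∀ z w : H, ‖G z - G w‖ ≤ K * ‖z - w‖)
    (zstar : H) (hzstar : G zstar = 0)
    (γ : ℝ) (hγ : 2 ≤ γ)
    (α β : ℕ → ℝ)
    (hα : ∀ t : ℕ, α t = 1 / (K * Real.sqrt ((t : ℝ) + γ)))
    (hβ : ∀ t : ℕ, β t = γ / ((t : ℝ) + γ))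
    (z : ℕ → H)
    (hstep : ∀ t : ℕ, z (t + 1) = z t - α t • G (z t) + β t • (z 0 - z t)) :
    ∀ t : ℕ,
      ‖z (t + 1) - zstar‖ ^ 2 ≤
        (1 - β t + 1.5 * (α t) ^ 2 * K ^ 2) * ‖z t - zstar‖ ^ 2
          + (β t + 2 * (β t) ^ 2) * ‖z 0 - zstar‖ ^ 2 := by
  intro t
  set a := z t - zstar with ha
  set b := z 0 - zstar with hb
  set g := G (z t) with hg
  have htγ : (0:ℝ) < (t : ℝ) + γ := by positivity
  have hγt : γ ≤ (t:ℝ) + γ := by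
    have : (0:ℝ) ≤ (t:ℝ) := Nat.cast_nonneg t
    linarith
  have hβ0 : 0 ≤ β t := by rw [hβ]; positivity
  have hβ1 : β t ≤ 1 := by
    rw [hβ]; exact div_le_one_of_le₀ hγt htγ.le
  have hα0 : 0 ≤ α t := by
    rw [hα]
    positivity
  -- monotonicity at (z t, zstar)
  have hQ : 0 ≤ ⟪g, a⟫ := by
    have := hmono (z t) zstar
    rwa [hzstar, sub_zero] at this
  -- Lipschitz
  have hGn : ‖g‖ ≤ K * ‖a‖ := by
    have := hlip (z t) zstar
    rwa [hzstar, sub_zero] at this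
  -- the step identity
  have hv : z (t + 1) - zstar = ((1 - β t) • a + β t • b) - α t • g := by
    rw [hstep t, ha, hb, hg]
    module
  have key : ‖z (t + 1) - zstar‖ ^ 2 =
      (1 - β t)^2 * ‖a‖^2 + 2*(1 - β t)*(β t)*⟪a, b⟫ + (β t)^2*‖b‖^2
        - 2*(α t)*(1 - β t)*⟪g, a⟫ - 2*(α t)*(β t)*⟪g, b⟫ + (α t)^2*‖g‖^2 := by
    rw [hv]
    rw [← real_inner_self_eq_norm_sq, ← real_inner_self_eq_norm_sq,
        ← real_inner_self_eq_norm_sq, ← real_inner_self_eq_norm_sq]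
    simp only [inner_sub_left, inner_sub_right, inner_add_left, inner_add_right,
      real_inner_smul_left, real_inner_smul_right]
    rw [real_inner_comm b a, real_inner_comm b g, real_inner_comm a g]
    ring
  have hab : ⟪a, b⟫ ≤ ‖a‖ * ‖b‖ := real_inner_le_norm a b
  have hgb : -⟪g, b⟫ ≤ ‖g‖ * ‖b‖ := by
    have := abs_real_inner_le_norm g b
    have := abs_le.mp this
    linarith [this.1]
  have hA : (0:ℝ) ≤ ‖a‖ := norm_nonneg a
  have hB : (0:ℝ) ≤ ‖b‖ := norm_nonneg b
  have hGn0 : (0:ℝ) ≤ ‖g‖ := norm_nonneg g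
  rw [key]
  nlinarith [sq_nonneg (‖a‖ - ‖b‖), sq_nonneg (α t * K * ‖a‖ - 2 * β t * ‖b‖),
    mul_nonneg hβ0 (sub_nonneg.mpr hβ1),
    mul_nonneg (mul_nonneg hα0 (sub_nonneg.mpr hβ1)) hQ,
    mul_nonneg (mul_nonneg hα0 hβ0) (mul_nonneg (sub_nonneg.mpr hGn) hB),
    mul_nonneg (mul_nonneg hα0 hα0) (mul_nonneg (sub_nonneg.mpr hGn) (by linarith : (0:ℝ) ≤ K * ‖a‖ + ‖g‖)),
    mul_nonneg (mul_nonneg hβ0 (sub_nonneg.mpr hβ1)) (sq_nonneg (‖a‖ - ‖b‖)),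
    mul_nonneg hα0 hβ0, sq_nonneg (α t), hK.le]
end

section
/- For all t ≥ 0, the Anchored GDA iterates satisfy ‖z_t − z*‖² ≤ 12 ‖z_0 − z*‖². -/
open scoped RealInnerProductSpace

lemma key_scalar (v u a D : ℝ) (hv : 2 ≤ v^2) (hv0 : 0 < v) (hu0 : 0 < u)
    (huv : u * v ≤ 1) (ha : 0 ≤ a) (hD : 0 ≤ D) (h12 : a^2 ≤ 12*D^2) :
    (a + v^2*u^2*(D-a))^2 + 2*v^2*u^3*a*D + u^2*a^2 ≤ 12*D^2 := by
  have hu2v2 : u^2 * v^2 ≤ 1 := by nlinarith [mul_pos hu0 hv0]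
  have hB : 2*v^2*a*(D-a) + v^4*u^2*(D-a)^2 + 2*v^2*u*a*D + a^2
      ≤ v^2*(D^2-a^2) + 2*v*a*D + a^2 := by
    have h1 : v^4*u^2*(D-a)^2 ≤ v^2*(D-a)^2 := by
      nlinarith [mul_nonneg (mul_nonneg (sq_nonneg v) (sq_nonneg (D-a))) (sub_nonneg.2 hu2v2)]
    have h2 : 2*v^2*u*a*D ≤ 2*v*a*D := by
      nlinarith [mul_nonneg (mul_nonneg (mul_nonneg hv0.le ha) hD) (sub_nonneg.2 huv)]
    nlinarith
  have hE : (a + v^2*u^2*(D-a))^2 + 2*v^2*u^3*a*D + u^2*a^2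
      = a^2 + u^2 * (2*v^2*a*(D-a) + v^4*u^2*(D-a)^2 + 2*v^2*u*a*D + a^2) := by ring
  rw [hE]
  have hu2 : (0:ℝ) < u^2 := by positivity
  have hv2 : (0:ℝ) < v^2 := by positivity
  have hle : u^2 * (2*v^2*a*(D-a) + v^4*u^2*(D-a)^2 + 2*v^2*u*a*D + a^2)
      ≤ u^2 * (v^2*(D^2-a^2) + 2*v*a*D + a^2) :=
    mul_le_mul_of_nonneg_left hB hu2.le
  have h11 : 2*v*a*D + a^2 ≤ 11*v^2*D^2 := by
    nlinarith [sq_nonneg (a - 2*v*D), sq_nonneg D]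
  rcases le_or_gt (v^2*(D^2-a^2) + 2*v*a*D + a^2) 0 with h | h
  · nlinarith [mul_nonpos_of_nonneg_of_nonpos hu2.le h]
  · have huinv : u^2 ≤ (v^2)⁻¹ := by
      rw [← one_div, le_div_iff₀ hv2]; linarith
    have hfrac : u^2 * (v^2*(D^2-a^2) + 2*v*a*D + a^2)
        ≤ (v^2*(D^2-a^2) + 2*v*a*D + a^2) / v^2 := by
      rw [div_eq_inv_mul]
      exact mul_le_mul_of_nonneg_right huinv h.le
    have hfin : (v^2*(D^2-a^2) + 2*v*a*D + a^2) / v^2 ≤ 12*D^2 - a^2 := by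
      rw [div_le_iff₀ hv2]; nlinarith
    linarith

lemma step_bound {H : Type*} [NormedAddCommGroup H] [InnerProductSpace ℝ H]
    (e e0 g : H) (an bn Ka : ℝ)
    (ha0 : 0 ≤ an) (hb0 : 0 ≤ bn) (hb1 : bn ≤ 1)
    (hmon : 0 ≤ ⟪e, g⟫) (hgn : ‖g‖ ≤ Ka) :
    ‖((1-bn)•e + bn•e0) - an•g‖^2
      ≤ ((1-bn)*‖e‖ + bn*‖e0‖)^2 + 2*an*bn*Ka*‖e0‖ + an^2*Ka^2 := by
  have hKa : 0 ≤ Ka := le_trans (norm_nonneg g) hgn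
  set x : H := (1-bn)•e + bn•e0 with hx
  have hexp : ‖x - an•g‖^2 = ‖x‖^2 - 2*an*⟪x, g⟫ + an^2*‖g‖^2 := by
    rw [norm_sub_sq_real, real_inner_smul_right, norm_smul, Real.norm_eq_abs,
      mul_pow, sq_abs]
    ring
  have hinner : ⟪x, g⟫ = (1-bn)*⟪e, g⟫ + bn*⟪e0, g⟫ := by
    rw [hx, inner_add_left, real_inner_smul_left, real_inner_smul_left]
  have hxn : ‖x‖ ≤ (1-bn)*‖e‖ + bn*‖e0‖ := by
    calc ‖x‖ ≤ ‖(1-bn)•e‖ + ‖bn•e0‖ := norm_add_le _ _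
    _ = (1-bn)*‖e‖ + bn*‖e0‖ := by
        rw [norm_smul, norm_smul, Real.norm_eq_abs, Real.norm_eq_abs,
          abs_of_nonneg (by linarith), abs_of_nonneg hb0]
  have hcs : -(‖g‖ * ‖e0‖) ≤ ⟪e0, g⟫ := by
    have h1 := abs_real_inner_le_norm e0 g
    rw [abs_le] at h1
    nlinarith [h1.1]
  have hxnn : 0 ≤ ‖x‖ := norm_nonneg _
  have hrhs : 0 ≤ (1-bn)*‖e‖ + bn*‖e0‖ := by
    have := norm_nonneg e; have := norm_nonneg e0; nlinarith
  rw [hexp, hinner]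
  have t1 : ‖x‖^2 ≤ ((1-bn)*‖e‖ + bn*‖e0‖)^2 := by nlinarith
  have t2 : 0 ≤ 2*an*(1-bn)*⟪e, g⟫ := by
    apply mul_nonneg _ hmon
    have h : 0 ≤ 1 - bn := by linarith
    positivity
  have t3 : -(2*an*bn)*⟪e0, g⟫ ≤ 2*an*bn*(‖g‖*‖e0‖) := by
    nlinarith [mul_nonneg ha0 hb0]
  have t4 : 2*an*bn*(‖g‖*‖e0‖) ≤ 2*an*bn*(Ka*‖e0‖) := by
    apply mul_le_mul_of_nonneg_left _ (by positivity)
    exact mul_le_mul_of_nonneg_right hgn (norm_nonneg _)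
  have t5 : an^2*‖g‖^2 ≤ an^2*Ka^2 := by
    nlinarith [mul_nonneg (sq_nonneg an) (mul_nonneg (add_nonneg (norm_nonneg g) hKa) (sub_nonneg.2 hgn))]
  nlinarith

/-- **Bounded iterates for Anchored GDA.** For all `t ≥ 0`,
`‖z t − zstar‖² ≤ 12 ‖z 0 − zstar‖²`. -/
theorem anchored_gda_bounded_iterates
    {H : Type*} [NormedAddCommGroup H] [InnerProductSpace ℝ H]
    (G : H → H) (K : ℝ) (hK : 0 < K)
    (hmono : ∀ z w : H, 0 ≤ ⟪G z - G w, z - w⟫)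
    (hlip : ∀ z w : H, ‖G z - G w‖ ≤ K * ‖z - w‖)
    (zstar : H) (hzstar : G zstar = 0)
    (γ : ℝ) (hγ : 2 ≤ γ)
    (α β : ℕ → ℝ)
    (hα : ∀ t : ℕ, α t = 1 / (K * Real.sqrt ((t : ℝ) + γ)))
    (hβ : ∀ t : ℕ, β t = γ / ((t : ℝ) + γ))
    (z : ℕ → H)
    (hstep : ∀ t : ℕ, z (t + 1) = z t - α t • G (z t) + β t • (z 0 - z t)) :
    ∀ t : ℕ, ‖z t - zstar‖ ^ 2 ≤ 12 * ‖z 0 - zstar‖ ^ 2 := by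
  intro t
  induction t with
  | zero => nlinarith [sq_nonneg ‖z 0 - zstar‖]
  | succ n ih =>
    have hγ0 : (0:ℝ) < γ := by linarith
    have hnγ : (0:ℝ) < (n:ℝ) + γ := by positivity
    set w := Real.sqrt ((n:ℝ) + γ) with hw
    have hw0 : 0 < w := Real.sqrt_pos.2 hnγ
    have hw2 : w^2 = (n:ℝ) + γ := Real.sq_sqrt hnγ.le
    set v := Real.sqrt γ with hv
    have hv0 : 0 < v := Real.sqrt_pos.2 hγ0
    have hv2 : v^2 = γ := Real.sq_sqrt hγ0.le
    have hvw : v ≤ w := Real.sqrt_le_sqrt (by linarith)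
    set u := 1/w with hu
    have hu0 : 0 < u := by positivity
    have huv : u * v ≤ 1 := by
      rw [hu, div_mul_eq_mul_div, one_mul, div_le_one hw0]; exact hvw
    have hαn : α n = u / K := by
      rw [hα n, hu, ← hw]
      rw [div_div, mul_comm]
    have hβn : β n = v^2 * u^2 := by
      rw [hβ n, hv2, hu, div_pow, one_pow, hw2]
      ring
    have hα0 : 0 < α n := by rw [hαn]; positivity
    have hβ0 : 0 < β n := by rw [hβn]; positivity
    have hβ1 : β n ≤ 1 := by
      rw [hβn]
      calc v^2 * u^2 = (u*v)^2 := by ring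
      _ ≤ 1 := by nlinarith [mul_pos hu0 hv0]
    have hz1 : z (n+1) - zstar
        = ((1 - β n) • (z n - zstar) + β n • (z 0 - zstar)) - α n • G (z n) := by
      rw [hstep n]; module
    have hmon : 0 ≤ ⟪z n - zstar, G (z n)⟫ := by
      have := hmono (z n) zstar
      rwa [hzstar, sub_zero, real_inner_comm] at this
    have hgn : ‖G (z n)‖ ≤ K * ‖z n - zstar‖ := by
      have := hlip (z n) zstar
      rwa [hzstar, sub_zero] at this
    have hsb := step_bound (z n - zstar) (z 0 - zstar) (G (z n)) (α n) (β n)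
      (K * ‖z n - zstar‖) hα0.le hβ0.le hβ1 hmon hgn
    set a := ‖z n - zstar‖ with hadef
    set D := ‖z 0 - zstar‖ with hDdef
    clear_value a D
    have ha0 : 0 ≤ a := hadef ▸ norm_nonneg _
    have hD0 : 0 ≤ D := hDdef ▸ norm_nonneg _
    have hrw : ((1 - β n)*a + β n*D)^2 + 2*(α n)*(β n)*(K*a)*D + (α n)^2*(K*a)^2
        = (a + v^2*u^2*(D-a))^2 + 2*v^2*u^3*a*D + u^2*a^2 := by
      rw [hβn, hαn]
      field_simp
      ring
    have hks := key_scalar v u a D (by rw [hv2]; exact hγ) hv0 hu0 huv ha0 hD0 ih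
    calc ‖z (n+1) - zstar‖^2
        = ‖((1 - β n) • (z n - zstar) + β n • (z 0 - zstar)) - α n • G (z n)‖^2 := by
          rw [hz1]
      _ ≤ ((1 - β n)*a + β n*D)^2 + 2*(α n)*(β n)*(K*a)*D + (α n)^2*(K*a)^2 := hsb
      _ = (a + v^2*u^2*(D-a))^2 + 2*v^2*u^3*a*D + u^2*a^2 := hrw
      _ ≤ 12*D^2 := hks
end

section
/- For all t ≥ 0, the distance of the Anchored GDA iterates to the anchor satisfies ‖z_t − z_0‖ ≤ D, where D = (√12 + 1)‖z_0 − z*‖. -/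
open scoped RealInnerProductSpace

lemma anchored_scalar_key (γ s c : ℝ) (hγ : 2 ≤ γ) (hs : γ ≤ s)
    (hc : c = Real.sqrt 12) :
    ((1 - γ/s) * c + γ/s)^2 + 2 * (γ/s) * (1/Real.sqrt s) * c
      + ((1/Real.sqrt s) * c)^2 ≤ c^2 := by
  have hs2 : (2:ℝ) ≤ s := le_trans hγ hs
  have hspos : 0 < s := by linarith
  obtain ⟨q, hq⟩ : ∃ q, q = Real.sqrt s := ⟨_, rfl⟩
  rw [← hq]
  have hq2 : q^2 = s := by rw [hq]; exact Real.sq_sqrt hspos.le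
  have hqpos : 0 < q := by rw [hq]; exact Real.sqrt_pos.mpr hspos
  obtain ⟨r2, hr2⟩ : ∃ r2, r2 = Real.sqrt 2 := ⟨_, rfl⟩
  have hr22 : r2^2 = 2 := by rw [hr2]; exact Real.sq_sqrt (by norm_num)
  have hr2pos : 0 < r2 := by rw [hr2]; exact Real.sqrt_pos.mpr (by norm_num)
  have hr2q : r2 ≤ q := by rw [hr2, hq]; exact Real.sqrt_le_sqrt hs2
  have hc2 : c^2 = 12 := by rw [hc]; exact Real.sq_sqrt (by norm_num)
  have hcpos : 0 < c := by rw [hc]; exact Real.sqrt_pos.mpr (by norm_num)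
  have hr2c : r2 * c ≤ 5 := by nlinarith [mul_pos hr2pos hcpos]
  have hγpos : 0 < γ := by linarith
  obtain ⟨d, hd⟩ : ∃ d, d = c - 1 := ⟨_, rfl⟩
  have hdpos : 0 < d := by nlinarith
  have key : (γ^2/s) * d^2 + 2*γ*c/q + c^2 ≤ 2*γ*d*c := by
    have h1 : γ^2/s ≤ γ := by
      rw [div_le_iff₀ hspos]; nlinarith
    have h2 : 2*γ*c/q ≤ γ*c*r2 := by
      rw [div_le_iff₀ hqpos]
      have h : r2 * (γ*c) ≤ q * (γ*c) :=
        mul_le_mul_of_nonneg_right hr2q (by positivity)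
      have h' : r2 * (r2 * (γ*c)) ≤ r2 * (q * (γ*c)) :=
        mul_le_mul_of_nonneg_left h hr2pos.le
      calc 2*γ*c = r2^2 * (γ*c) := by rw [hr22]; ring
        _ = r2 * (r2*(γ*c)) := by ring
        _ ≤ r2 * (q*(γ*c)) := h'
        _ = γ*c*r2*q := by ring
    have h3 : γ*d^2 + γ*c*r2 + c^2 ≤ 2*γ*d*c := by
      have h11 : 6 ≤ 2*d*c - d^2 - c*r2 := by nlinarith
      nlinarith [mul_le_mul_of_nonneg_left h11 hγpos.le]
    have h4 : (γ^2/s) * d^2 ≤ γ * d^2 :=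
      mul_le_mul_of_nonneg_right h1 (by positivity)
    linarith
  have e1 : (1 - γ/s) * c + γ/s = c - (γ/s)*d := by rw [hd]; ring
  rw [e1]
  have hsne : s ≠ 0 := ne_of_gt hspos
  have hqne : q ≠ 0 := ne_of_gt hqpos
  have e0 : ((1/q)*c)^2 = c^2 / s := by
    rw [← hq2]; field_simp
  rw [e0]
  have e2 : (c - (γ/s)*d)^2 + 2 * (γ/s) * (1/q) * c + c^2/s
      = c^2 - 2*(γ/s)*d*c + ((γ^2/s) * d^2 + 2*γ*c/q + c^2)/s := by
    field_simp
    ring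
  rw [e2]
  have hdiv : ((γ^2/s) * d^2 + 2*γ*c/q + c^2)/s ≤ (2*γ*d*c)/s :=
    by gcongr
  have e3 : (2*γ*d*c)/s = 2*(γ/s)*d*c := by ring
  linarith [e3 ▸ hdiv]

open scoped RealInnerProductSpace

lemma anchored_step_bound {H : Type*} [NormedAddCommGroup H]
    [InnerProductSpace ℝ H] (u w g : H) (a b c K R : ℝ)
    (ha0 : 0 ≤ a) (hb0 : 0 ≤ b) (hb1 : b ≤ 1) (hK : 0 ≤ K)
    (hug : 0 ≤ ⟪u, g⟫) (hgn : ‖g‖ ≤ K * ‖u‖)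
    (hr : ‖u‖ ≤ c * R) (hwR : ‖w‖ = R) (hR0 : 0 ≤ R) :
    ‖((1 - b) • u + b • w) - a • g‖^2
      ≤ (((1 - b) * c + b)^2 + 2 * b * (a * K) * c + ((a * K) * c)^2) * R^2 := by
  have hc0 : 0 ≤ c * R := le_trans (norm_nonneg u) hr
  have hnormg : ‖a • g‖ = a * ‖g‖ := by
    rw [norm_smul, Real.norm_eq_abs, abs_of_nonneg ha0]
  have hinner : ⟪(1 - b) • u + b • w, a • g⟫
      = a * ((1 - b) * ⟪u, g⟫ + b * ⟪w, g⟫) := by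
    rw [real_inner_smul_right, inner_add_left, real_inner_smul_left,
      real_inner_smul_left]
  have hexp : ‖((1 - b) • u + b • w) - a • g‖^2
      = ‖(1 - b) • u + b • w‖^2
        - 2 * (a * ((1 - b) * ⟪u, g⟫ + b * ⟪w, g⟫)) + (a * ‖g‖)^2 := by
    rw [@norm_sub_sq_real, hinner, hnormg, mul_pow]
  rw [hexp]
  -- bound on the mixed inner product
  have hwg : -(‖w‖ * ‖g‖) ≤ ⟪w, g⟫ := by
    have h := abs_real_inner_le_norm w g
    cases abs_le.mp h with
    | intro h1 h2 => linarith
  have hip : -(a * b * (K * (c * R) * R))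
      ≤ a * ((1 - b) * ⟪u, g⟫ + b * ⟪w, g⟫) := by
    have h1 : 0 ≤ a * ((1 - b) * ⟪u, g⟫) :=
      mul_nonneg ha0 (mul_nonneg (by linarith) hug)
    have hgcr : ‖g‖ ≤ K * (c * R) := by
      refine le_trans hgn (mul_le_mul_of_nonneg_left hr hK)
    have h2 : -(K * (c * R) * R) ≤ ⟪w, g⟫ := by
      have h2a : ‖w‖ * ‖g‖ ≤ R * (K * (c * R)) := by
        rw [hwR]; exact mul_le_mul_of_nonneg_left hgcr hR0
      nlinarith
    have h3 : (a * b) * (-(K * (c * R) * R)) ≤ (a * b) * ⟪w, g⟫ :=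
      mul_le_mul_of_nonneg_left h2 (mul_nonneg ha0 hb0)
    nlinarith
  -- bound on ‖v‖²
  have hA : ‖(1 - b) • u + b • w‖^2 ≤ (((1 - b) * c + b) * R)^2 := by
    have hvb : ‖(1 - b) • u + b • w‖ ≤ ((1 - b) * c + b) * R := by
      calc ‖(1 - b) • u + b • w‖ ≤ ‖(1 - b) • u‖ + ‖b • w‖ := norm_add_le _ _
        _ = (1 - b) * ‖u‖ + b * ‖w‖ := by
            rw [norm_smul, norm_smul, Real.norm_eq_abs, Real.norm_eq_abs,
              abs_of_nonneg (by linarith : (0:ℝ) ≤ 1 - b), abs_of_nonneg hb0]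
        _ ≤ (1 - b) * (c * R) + b * R := by
            rw [hwR]
            have := mul_le_mul_of_nonneg_left hr
              (by linarith : (0:ℝ) ≤ 1 - b)
            linarith
        _ = ((1 - b) * c + b) * R := by ring
    exact pow_le_pow_left₀ (norm_nonneg _) hvb 2
  -- bound on the Lipschitz term
  have hC : (a * ‖g‖)^2 ≤ ((a * K) * c * R)^2 := by
    apply pow_le_pow_left₀ (mul_nonneg ha0 (norm_nonneg _))
    calc a * ‖g‖ ≤ a * (K * ‖u‖) := mul_le_mul_of_nonneg_left hgn ha0
      _ ≤ a * (K * (c * R)) := by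
          exact mul_le_mul_of_nonneg_left
            (mul_le_mul_of_nonneg_left hr hK) ha0
      _ = (a * K) * c * R := by ring
  nlinarith


/-- **Bounded distance to the anchor for Anchored GDA.** For all `t ≥ 0`,
`‖z t − z 0‖ ≤ D` where `D = (√12 + 1) ‖z 0 − zstar‖`. -/
theorem anchored_gda_bounded_anchor_distance
    {H : Type*} [NormedAddCommGroup H] [InnerProductSpace ℝ H]
    (G : H → H) (K : ℝ) (hK : 0 < K)
    (hmono : ∀ z w : H, 0 ≤ ⟪G z - G w, z - w⟫)
    (hlip : ∀ z w : H, ‖G z - G w‖ ≤ K * ‖z - w‖)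
    (zstar : H) (hzstar : G zstar = 0)
    (γ : ℝ) (hγ : 2 ≤ γ)
    (α β : ℕ → ℝ)
    (hα : ∀ t : ℕ, α t = 1 / (K * Real.sqrt ((t : ℝ) + γ)))
    (hβ : ∀ t : ℕ, β t = γ / ((t : ℝ) + γ))
    (z : ℕ → H)
    (hstep : ∀ t : ℕ, z (t + 1) = z t - α t • G (z t) + β t • (z 0 - z t))
    (D : ℝ) (hD : D = (Real.sqrt 12 + 1) * ‖z 0 - zstar‖) :
    ∀ t : ℕ, ‖z t - z 0‖ ≤ D := by
  obtain ⟨c, hc⟩ : ∃ c, c = Real.sqrt 12 := ⟨_, rfl⟩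
  have hc2 : c^2 = 12 := by rw [hc]; exact Real.sq_sqrt (by norm_num)
  have hcpos : 0 < c := by rw [hc]; exact Real.sqrt_pos.mpr (by norm_num)
  have hc1 : 1 ≤ c := by nlinarith
  have hR0 : (0:ℝ) ≤ ‖z 0 - zstar‖ := norm_nonneg _
  have hmain : ∀ t : ℕ, ‖z t - zstar‖ ≤ c * ‖z 0 - zstar‖ := by
    intro t
    induction t with
    | zero => exact le_mul_of_one_le_left hR0 hc1
    | succ t ih =>
      have ht0 : (0:ℝ) ≤ (t:ℝ) := Nat.cast_nonneg t
      have hsγ : γ ≤ (t:ℝ) + γ := by linarith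
      have hspos : (0:ℝ) < (t:ℝ) + γ := by linarith
      have hqpos : 0 < Real.sqrt ((t:ℝ) + γ) := Real.sqrt_pos.mpr hspos
      have ha0 : 0 ≤ α t := by rw [hα t]; positivity
      have hb0 : 0 ≤ β t := by rw [hβ t]; positivity
      have hb1 : β t ≤ 1 := by
        rw [hβ t, div_le_one hspos]; exact hsγ
      have haK : α t * K = 1 / Real.sqrt ((t:ℝ) + γ) := by
        rw [hα t]; field_simp
      have hug : 0 ≤ ⟪z t - zstar, G (z t)⟫ := by
        have h := hmono (z t) zstar
        rw [hzstar, sub_zero] at h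
        rw [real_inner_comm] at h
        exact h
      have hgn : ‖G (z t)‖ ≤ K * ‖z t - zstar‖ := by
        have h := hlip (z t) zstar
        rwa [hzstar, sub_zero] at h
      have hzz : z (t + 1) - zstar
          = ((1 - β t) • (z t - zstar) + β t • (z 0 - zstar))
            - α t • G (z t) := by
        rw [hstep t]; module
      have hstepb := anchored_step_bound (z t - zstar) (z 0 - zstar)
        (G (z t)) (α t) (β t) c K (‖z 0 - zstar‖) ha0 hb0 hb1 hK.le
        hug hgn ih rfl hR0
      rw [← hzz] at hstepb
      have hscalar := anchored_scalar_key γ ((t:ℝ) + γ) c hγ hsγ hc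
      rw [← hβ t, ← haK] at hscalar
      have hsq : ‖z (t+1) - zstar‖^2 ≤ (c * ‖z 0 - zstar‖)^2 := by
      -- combine
        calc ‖z (t+1) - zstar‖^2
            ≤ (((1 - β t) * c + β t)^2 + 2 * (β t) * (α t * K) * c
              + ((α t * K) * c)^2) * ‖z 0 - zstar‖^2 := by
              calc ‖z (t+1) - zstar‖^2
                  ≤ (((1 - β t) * c + β t)^2 + 2 * β t * (α t * K) * c
                    + ((α t * K) * c)^2) * ‖z 0 - zstar‖^2 := hstepb
                _ = _ := by ring
          _ ≤ c^2 * ‖z 0 - zstar‖^2 :=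
              mul_le_mul_of_nonneg_right hscalar (sq_nonneg _)
          _ = (c * ‖z 0 - zstar‖)^2 := by ring
      nlinarith [norm_nonneg (z (t+1) - zstar), mul_nonneg hcpos.le hR0]
  intro t
  have h1 : ‖z t - z 0‖ ≤ ‖z t - zstar‖ + ‖zstar - z 0‖ := by
    have he : z t - z 0 = (z t - zstar) + (zstar - z 0) := by abel
    rw [he]; exact norm_add_le _ _
  have h2 : ‖zstar - z 0‖ = ‖z 0 - zstar‖ := norm_sub_rev _ _
  have h3 := hmain t
  rw [hD, ← hc]
  linarith
end

section
/- There exists a constant E ≥ 0, namely E = max(‖z_2 − z_1‖(1 + γ), 20γD) with D = (√12 + 1)‖z_0 − z*‖, such that for all t ≥ 1 the consecutive differences of the Anchored GDA iterates satisfy ‖z_{t+1} − z_t‖ ≤ E/(t + γ). -/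
set_option maxHeartbeats 1000000

open scoped RealInnerProductSpace


-- scalar lemma for boundedness induction
lemma agda_bnd_poly (γ q v r0 : ℝ) (hγ : 2 ≤ γ) (hsγ : γ ≤ q^2) (hq43 : 4/3 ≤ q)
    (hv2 : v^2 = 12) (hv3 : 3 ≤ v) (hv4 : v ≤ 4) (hr0 : 0 ≤ r0) :
    ((q^2-γ)*((v+1)*r0)+γ*r0)^2*q + 2*γ*((v+1)*r0)*r0*q^2 + ((v+1)*r0)^2*q^2*q
      ≤ ((v+1)*r0)^2*(q^2)^2*q := by
  have hq0 : 0 < q := by linarith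
  have hM : (3/2)*γ*((v+1)*r0)*r0 ≤ 2*γ*((v+1)*r0)*(v*r0) - γ*(v*r0)^2 - ((v+1)*r0)^2 := by
    nlinarith [mul_nonneg (sub_nonneg.2 hγ) (sq_nonneg r0), sq_nonneg r0]
  have h1 : ((q^2-γ)*((v+1)*r0)+γ*r0)^2
      ≤ (q^2)^2*((v+1)*r0)^2 - 2*q^2*γ*((v+1)*r0)*(v*r0) + q^2*γ*(v*r0)^2 := by
    nlinarith [mul_nonneg (mul_nonneg (by linarith : (0:ℝ) ≤ γ) (sub_nonneg.2 hsγ)) (sq_nonneg (v*r0))]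
  have hDr : 0 ≤ γ*((v+1)*r0)*r0 :=
    mul_nonneg (mul_nonneg (by linarith) (by nlinarith)) hr0
  nlinarith [mul_le_mul_of_nonneg_right h1 hq0.le,
    mul_le_mul_of_nonneg_left hM (mul_nonneg hq0.le (by nlinarith : (0:ℝ) ≤ q^2)),
    mul_nonneg (mul_nonneg hDr (by nlinarith : (0:ℝ) ≤ q^2)) (by linarith : (0:ℝ) ≤ 3*q - 4)]

-- scalar lemma for difference induction
lemma agda_key2_poly (γ p q : ℝ) (hγ : 2 ≤ γ) (hp0 : 0 < p) (hq0 : 0 < q)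
    (h1 : γ + 1 ≤ p^2) (hq2 : q^2 = p^2+1) :
    (p*q-γ)^2 + q^2 ≤ (q^2 - 53/50)^2 := by
  have hp2 : p^2 = q^2 - 1 := by linarith
  have hkey : p^2*q^2 = (q^2-1)*q^2 := by rw [hp2]
  have hpq : p ≤ q := by nlinarith
  have hw1 : q^2 - 1 ≤ p*q := by nlinarith [mul_le_mul_of_nonneg_left hpq hp0.le]
  nlinarith [mul_le_mul_of_nonneg_left hw1 (by linarith : (0:ℝ) ≤ 2*γ),
    mul_nonneg (show (0:ℝ) ≤ 2*γ - 53/25 by linarith)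
      (show (0:ℝ) ≤ q^2 - γ - 2 by nlinarith),
    sq_nonneg (γ-2)]

lemma agda_norm_sub_smul {H : Type*} [NormedAddCommGroup H] [InnerProductSpace ℝ H]
    (x y : H) (a : ℝ) : ‖x - a • y‖^2 = ‖x‖^2 - 2*a*⟪y, x⟫ + a^2*‖y‖^2 := by
  rw [norm_sub_sq_real, real_inner_smul_right, norm_smul, mul_pow,
    Real.norm_eq_abs, sq_abs, real_inner_comm]
  ring

lemma agda_bounded
    {H : Type*} [NormedAddCommGroup H] [InnerProductSpace ℝ H]
    (G : H → H) (K : ℝ) (hK : 0 < K)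
    (hmono : ∀ z w : H, 0 ≤ ⟪G z - G w, z - w⟫)
    (hlip : ∀ z w : H, ‖G z - G w‖ ≤ K * ‖z - w‖)
    (zstar : H) (hzstar : G zstar = 0)
    (γ : ℝ) (hγ : 2 ≤ γ)
    (α β : ℕ → ℝ)
    (hα : ∀ t : ℕ, α t = 1 / (K * Real.sqrt ((t : ℝ) + γ)))
    (hβ : ∀ t : ℕ, β t = γ / ((t : ℝ) + γ))
    (z : ℕ → H)
    (hstep : ∀ t : ℕ, z (t + 1) = z t - α t • G (z t) + β t • (z 0 - z t))
    (D : ℝ) (hD : D = (Real.sqrt 12 + 1) * ‖z 0 - zstar‖) :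
    ∀ t, ‖z t - zstar‖ ≤ D := by
  have hv2 : (Real.sqrt 12)^2 = 12 := Real.sq_sqrt (by norm_num)
  have hv0 : 0 ≤ Real.sqrt 12 := Real.sqrt_nonneg 12
  have hv3 : 3 ≤ Real.sqrt 12 := by nlinarith
  have hv4 : Real.sqrt 12 ≤ 4 := by nlinarith
  have hr0 : 0 ≤ ‖z 0 - zstar‖ := norm_nonneg _
  have hr0D : ‖z 0 - zstar‖ ≤ D := by rw [hD]; nlinarith
  have hD0 : 0 ≤ D := le_trans hr0 hr0D
  intro t
  induction t with
  | zero => exact hr0D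
  | succ t ih =>
    have hsγ : γ ≤ (t:ℝ) + γ := le_add_of_nonneg_left (Nat.cast_nonneg t)
    have hs0 : 0 < (t:ℝ) + γ := by linarith
    obtain ⟨q, hq2, hq0⟩ : ∃ q:ℝ, q^2 = (t:ℝ)+γ ∧ 0 < q :=
      ⟨Real.sqrt _, Real.sq_sqrt hs0.le, Real.sqrt_pos.2 hs0⟩
    have hqeq : Real.sqrt ((t:ℝ)+γ) = q := by rw [← hq2]; exact Real.sqrt_sq hq0.le
    have hαt : α t = 1/(K*q) := by rw [hα t, hqeq]
    have hβt : β t = γ/((t:ℝ)+γ) := hβ t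
    have hq43 : 4/3 ≤ q := by nlinarith
    have hα0 : 0 ≤ α t := by rw [hαt]; positivity
    have hβ0 : 0 ≤ β t := by rw [hβt]; exact div_nonneg (by linarith) hs0.le
    have hβ1 : β t ≤ 1 := by rw [hβt, div_le_one hs0]; linarith
    set r0 := ‖z 0 - zstar‖ with hr0def
    set w := (1 - β t) • (z t - zstar) + β t • (z 0 - zstar) with hw
    have hz1 : z (t+1) - zstar = w - α t • G (z t) := by
      rw [hstep t, hw]; module
    have hgw : ⟪G (z t), w⟫ = (1 - β t)*⟪G (z t), z t - zstar⟫ + β t*⟪G (z t), z 0 - zstar⟫ := by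
      rw [hw, inner_add_right, real_inner_smul_right, real_inner_smul_right]
    have hga : 0 ≤ ⟪G (z t), z t - zstar⟫ := by
      have h := hmono (z t) zstar; rwa [hzstar, sub_zero] at h
    have hgl : ‖G (z t)‖ ≤ K * ‖z t - zstar‖ := by
      have h := hlip (z t) zstar; rwa [hzstar, sub_zero] at h
    have hgD : ‖G (z t)‖ ≤ K*D := le_trans hgl (mul_le_mul_of_nonneg_left ih hK.le)
    have hib : -(K*D*r0) ≤ ⟪G (z t), z 0 - zstar⟫ := by
      have h1 := abs_real_inner_le_norm (G (z t)) (z 0 - zstar)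
      have h2 : ‖G (z t)‖ * ‖z 0 - zstar‖ ≤ K*D*r0 := mul_le_mul_of_nonneg_right hgD hr0
      have h3 := neg_abs_le ⟪G (z t), z 0 - zstar⟫
      linarith
    have hwle : ‖w‖ ≤ (1-β t)*D + β t*r0 := by
      have h1 : ‖w‖ ≤ ‖(1-β t) • (z t - zstar)‖ + ‖β t • (z 0 - zstar)‖ := by
        rw [hw]; exact norm_add_le _ _
      rw [norm_smul, norm_smul, Real.norm_eq_abs, Real.norm_eq_abs,
        abs_of_nonneg hβ0, abs_of_nonneg (by linarith : (0:ℝ) ≤ 1 - β t)] at h1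
      have h2 : (1-β t)*‖z t - zstar‖ ≤ (1-β t)*D :=
        mul_le_mul_of_nonneg_left ih (by linarith)
      linarith
    have hiw : -(β t*(K*D*r0)) ≤ ⟪G (z t), w⟫ := by
      rw [hgw]
      have h1 : 0 ≤ (1 - β t)*⟪G (z t), z t - zstar⟫ := mul_nonneg (by linarith) hga
      have h2 : β t*(-(K*D*r0)) ≤ β t*⟪G (z t), z 0 - zstar⟫ :=
        mul_le_mul_of_nonneg_left hib hβ0
      nlinarith
    have hgoal2 : ‖z (t+1) - zstar‖^2
        ≤ ((1-β t)*D + β t*r0)^2 + 2*(α t)*(β t*(K*D*r0)) + (α t)^2*(K*D)^2 := by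
      rw [hz1, agda_norm_sub_smul w (G (z t)) (α t)]
      have A : ‖w‖^2 ≤ ((1-β t)*D + β t*r0)^2 := pow_le_pow_left₀ (norm_nonneg w) hwle 2
      have B : -(2*(α t)*⟪G (z t), w⟫) ≤ 2*(α t)*(β t*(K*D*r0)) := by
        have hB := mul_le_mul_of_nonneg_left hiw (by linarith : (0:ℝ) ≤ 2*α t)
        nlinarith [hB]
      have C : (α t)^2*‖G (z t)‖^2 ≤ (α t)^2*(K*D)^2 :=
        mul_le_mul_of_nonneg_left
          (by nlinarith [pow_le_pow_left₀ (norm_nonneg (G (z t))) hgD 2] :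
            ‖G (z t)‖^2 ≤ (K*D)^2) (sq_nonneg (α t))
      linarith
    have hscal : ((1-β t)*D + β t*r0)^2 + 2*(α t)*(β t*(K*D*r0)) + (α t)^2*(K*D)^2 ≤ D^2 := by
      rw [hαt, hβt, hD, ← hq2]
      have e : ((1-γ/q^2)*((Real.sqrt 12+1)*r0) + (γ/q^2)*r0)^2
            + 2*(1/(K*q))*((γ/q^2)*(K*((Real.sqrt 12+1)*r0)*r0))
            + (1/(K*q))^2*(K*((Real.sqrt 12+1)*r0))^2
          = (((q^2-γ)*((Real.sqrt 12+1)*r0)+γ*r0)^2*q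
            + 2*γ*((Real.sqrt 12+1)*r0)*r0*q^2 + ((Real.sqrt 12+1)*r0)^2*q^2*q)/((q^2)^2*q) := by
        field_simp
      rw [e, div_le_iff₀ (by positivity)]
      nlinarith [agda_bnd_poly γ q (Real.sqrt 12) r0 hγ (by linarith) hq43 hv2 hv3 hv4 hr0]
    have : ‖z (t+1) - zstar‖^2 ≤ D^2 := le_trans hgoal2 hscal
    exact le_of_pow_le_pow_left₀ (by norm_num) hD0 this

/-- **Bounded iterate differences for Anchored GDA.** There exists `E ≥ 0`, namely
`E = max (‖z 2 − z 1‖ (1+γ)) (20 γ D)` with `D = (√12 + 1) ‖z 0 − zstar‖`, such that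
for all `t ≥ 1`, `‖z (t+1) − z t‖ ≤ E / (t + γ)`. -/
theorem anchored_gda_diff_contraction
    {H : Type*} [NormedAddCommGroup H] [InnerProductSpace ℝ H]
    (G : H → H) (K : ℝ) (hK : 0 < K)
    (hmono : ∀ z w : H, 0 ≤ ⟪G z - G w, z - w⟫)
    (hlip : ∀ z w : H, ‖G z - G w‖ ≤ K * ‖z - w‖)
    (zstar : H) (hzstar : G zstar = 0)
    (γ : ℝ) (hγ : 2 ≤ γ)
    (α β : ℕ → ℝ)
    (hα : ∀ t : ℕ, α t = 1 / (K * Real.sqrt ((t : ℝ) + γ)))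
    (hβ : ∀ t : ℕ, β t = γ / ((t : ℝ) + γ))
    (z : ℕ → H)
    (hstep : ∀ t : ℕ, z (t + 1) = z t - α t • G (z t) + β t • (z 0 - z t))
    (D : ℝ) (hD : D = (Real.sqrt 12 + 1) * ‖z 0 - zstar‖) :
    ∃ E : ℝ, 0 ≤ E ∧ E = max (‖z 2 - z 1‖ * (1 + γ)) (20 * γ * D) ∧
      ∀ t : ℕ, 1 ≤ t → ‖z (t + 1) - z t‖ ≤ E / ((t : ℝ) + γ) := by
  have hbnd := agda_bounded G K hK hmono hlip zstar hzstar γ hγ α β hα hβ z hstep D hD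
  have hD0 : 0 ≤ D := le_trans (norm_nonneg _) (hbnd 0)
  set E := max (‖z 2 - z 1‖ * (1 + γ)) (20 * γ * D) with hE
  have hγD0 : (0:ℝ) ≤ γ*D := mul_nonneg (by linarith) hD0
  have hE20 : 20*γ*D ≤ E := le_max_right _ _
  have hE0 : 0 ≤ E := le_trans (by linarith) hE20
  refine ⟨E, hE0, rfl, ?_⟩
  intro t ht
  induction t, ht using Nat.le_induction with
  | base =>
    have h1γ : (0:ℝ) < 1 + γ := by linarith
    rw [show ((1:ℕ):ℝ) = (1:ℝ) from Nat.cast_one, le_div_iff₀ h1γ]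
    exact le_max_left _ _
  | succ n hn IH =>
    -- setup scalars
    have hn1 : (1:ℝ) ≤ (n:ℝ) := by exact_mod_cast hn
    have hp0' : (0:ℝ) < (n:ℝ) + γ := by linarith
    have hq0' : (0:ℝ) < (n:ℝ) + 1 + γ := by linarith
    obtain ⟨p, hp2, hp0⟩ : ∃ p:ℝ, p^2 = (n:ℝ)+γ ∧ 0 < p :=
      ⟨Real.sqrt _, Real.sq_sqrt hp0'.le, Real.sqrt_pos.2 hp0'⟩
    obtain ⟨q, hq2, hq0⟩ : ∃ q:ℝ, q^2 = (n:ℝ)+1+γ ∧ 0 < q :=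
      ⟨Real.sqrt _, Real.sq_sqrt hq0'.le, Real.sqrt_pos.2 hq0'⟩
    have hpeq : Real.sqrt ((n:ℝ)+γ) = p := by rw [← hp2]; exact Real.sqrt_sq hp0.le
    have hqeq : Real.sqrt ((n:ℝ)+1+γ) = q := by rw [← hq2]; exact Real.sqrt_sq hq0.le
    have hcast : ((n+1:ℕ):ℝ) + γ = (n:ℝ)+1+γ := by push_cast; ring
    have hq2p : q^2 = p^2 + 1 := by rw [hp2, hq2]; ring
    have hγ1p : γ + 1 ≤ p^2 := by rw [hp2]; linarith
    have hpq : p ≤ q := by nlinarith only [hp0, hq0, hq2p]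
    have hαn : α n = 1/(K*p) := by rw [hα n, hpeq]
    have hαn1 : α (n+1) = 1/(K*q) := by rw [hα (n+1), hcast, hqeq]
    have hβn : β n = γ/p^2 := by rw [hβ n, ← hp2]
    have hβn1 : β (n+1) = γ/q^2 := by rw [hβ (n+1), hcast, ← hq2]
    have hα10 : 0 ≤ α (n+1) := by rw [hαn1]; positivity
    -- the key identity
    have hc : α (n+1) = (p/q) * α n := by
      rw [hαn, hαn1]; field_simp
    have hGn : α n • G (z n) = z n - z (n+1) + β n • (z 0 - z n) := by
      rw [hstep n]; module
    have hGn' : α (n+1) • G (z n) = (p/q) • (z n - z (n+1) + β n • (z 0 - z n)) := by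
      rw [hc, mul_smul, hGn]
    have hid : z (n+1+1) - z (n+1)
        = ((p/q - β (n+1)) • (z (n+1) - z n) - α (n+1) • (G (z (n+1)) - G (z n)))
          + ((p/q)*β n - β (n+1)) • (z n - z 0) := by
      rw [hstep (n+1),
        show α (n+1) • (G (z (n+1)) - G (z n))
          = α (n+1) • G (z (n+1)) - (p/q) • (z n - z (n+1) + β n • (z 0 - z n)) from by
            rw [smul_sub, hGn']]
      module
    have htri : ‖z (n+1+1) - z (n+1)‖
        ≤ ‖(p/q - β (n+1)) • (z (n+1) - z n) - α (n+1) • (G (z (n+1)) - G (z n))‖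
          + ‖((p/q)*β n - β (n+1)) • (z n - z 0)‖ := by
      rw [hid]; exact norm_add_le _ _
    -- bound the contraction part
    have heq1 : p/q - β (n+1) = (p*q-γ)/q^2 := by rw [hβn1]; field_simp
    have hpqγ : γ ≤ p*q := by
      nlinarith only [mul_le_mul_of_nonneg_left hpq hp0.le, hγ1p, hp2, hn1, hγ]
    have hcb0 : 0 ≤ p/q - β (n+1) := by
      rw [heq1]; exact div_nonneg (by linarith) (by positivity)
    have hmon : 0 ≤ ⟪G (z (n+1)) - G (z n), z (n+1) - z n⟫ := hmono _ _
    have hinn : 0 ≤ ⟪G (z (n+1)) - G (z n), (p/q - β (n+1)) • (z (n+1) - z n)⟫ := by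
      rw [real_inner_smul_right]; exact mul_nonneg hcb0 hmon
    have hαK : α (n+1)*K = 1/q := by rw [hαn1]; field_simp
    have e1 : α (n+1)*‖G (z (n+1)) - G (z n)‖ ≤ (1/q)*‖z (n+1) - z n‖ := by
      calc α (n+1)*‖G (z (n+1)) - G (z n)‖ ≤ α (n+1)*(K*‖z (n+1) - z n‖) :=
            mul_le_mul_of_nonneg_left (hlip _ _) hα10
        _ = (α (n+1)*K)*‖z (n+1) - z n‖ := by ring
        _ = (1/q)*‖z (n+1) - z n‖ := by rw [hαK]
    have hy2 : (α (n+1))^2*‖G (z (n+1)) - G (z n)‖^2 ≤ (1/q)^2*‖z (n+1) - z n‖^2 := by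
      rw [← mul_pow, ← mul_pow]
      exact pow_le_pow_left₀ (mul_nonneg hα10 (norm_nonneg _)) e1 2
    have hx2 : ‖(p/q - β (n+1)) • (z (n+1) - z n)‖^2
        = ((p*q-γ)/q^2)^2 * ‖z (n+1) - z n‖^2 := by
      rw [heq1, norm_smul, mul_pow, Real.norm_eq_abs, sq_abs]
    have e2 : (((p*q-γ)/q^2)^2 + (1/q)^2) * ‖z (n+1) - z n‖^2
        = (((p*q-γ)^2 + q^2)/(q^2)^2) * ‖z (n+1) - z n‖^2 := by
      rw [show ((p*q-γ)/q^2)^2 + (1/q)^2 = ((p*q-γ)^2 + q^2)/(q^2)^2 from by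
        field_simp]
    have hu2 : ‖(p/q - β (n+1)) • (z (n+1) - z n) - α (n+1) • (G (z (n+1)) - G (z n))‖^2
        ≤ (((p*q-γ)^2 + q^2)/(q^2)^2) * ‖z (n+1) - z n‖^2 := by
      rw [agda_norm_sub_smul, hx2]
      have h3 : 0 ≤ 2*(α (n+1))*⟪G (z (n+1)) - G (z n), (p/q - β (n+1)) • (z (n+1) - z n)⟫ := by
        have := mul_nonneg hα10 hinn; linarith
      linarith only [h3, hy2, e2]
    have hfrac : ((p*q-γ)^2 + q^2)/(q^2)^2 ≤ ((q^2 - 53/50)/q^2)^2 := by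
      rw [div_pow]
      exact div_le_div_of_nonneg_right
        (agda_key2_poly γ p q hγ hp0 hq0 hγ1p hq2p) (by positivity)
    have hq24 : (4:ℝ) ≤ q^2 := by rw [hq2]; linarith
    have hμ0 : 0 ≤ (q^2 - 53/50)/q^2 := div_nonneg (by linarith) (by positivity)
    have hule : ‖(p/q - β (n+1)) • (z (n+1) - z n) - α (n+1) • (G (z (n+1)) - G (z n))‖
        ≤ ((q^2 - 53/50)/q^2) * ‖z (n+1) - z n‖ := by
      have h2 : ‖(p/q - β (n+1)) • (z (n+1) - z n) - α (n+1) • (G (z (n+1)) - G (z n))‖^2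
          ≤ (((q^2 - 53/50)/q^2) * ‖z (n+1) - z n‖)^2 := by
        have h4 := mul_le_mul_of_nonneg_right hfrac (sq_nonneg ‖z (n+1) - z n‖)
        have h5 : ((q^2 - 53/50)/q^2)^2 * ‖z (n+1) - z n‖^2
            = (((q^2 - 53/50)/q^2) * ‖z (n+1) - z n‖)^2 := by ring
        linarith only [hu2, h4, h5]
      exact le_of_pow_le_pow_left₀ two_ne_zero (mul_nonneg hμ0 (norm_nonneg _)) h2
    -- bound the anchor part
    have heq3 : (p/q)*β n - β (n+1) = γ*(q-p)/(p*q^2) := by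
      rw [hβn, hβn1]; field_simp
    have hanchc : 0 ≤ (p/q)*β n - β (n+1) := by
      rw [heq3]
      exact div_nonneg (mul_nonneg (by linarith) (by linarith)) (by positivity)
    have h2p : 2*(q-p)*p ≤ 1 := by nlinarith only [sq_nonneg (q-p), hq2p]
    have hanchle : γ*(q-p)/(p*q^2) ≤ γ/(2*(p^2*q^2)) := by
      rw [div_le_div_iff₀ (by positivity) (by positivity)]
      have h6 := mul_le_mul_of_nonneg_left h2p
        (show (0:ℝ) ≤ γ*(p*q^2) from mul_nonneg (by linarith) (by positivity))
      nlinarith only [h6]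
    have hz2D : ‖z n - z 0‖ ≤ 2*D := by
      have h7 : z n - z 0 = (z n - zstar) - (z 0 - zstar) := by abel
      calc ‖z n - z 0‖ = ‖(z n - zstar) - (z 0 - zstar)‖ := by rw [h7]
        _ ≤ ‖z n - zstar‖ + ‖z 0 - zstar‖ := norm_sub_le _ _
        _ ≤ D + D := add_le_add (hbnd n) (hbnd 0)
        _ = 2*D := by ring
    have hanch : ‖((p/q)*β n - β (n+1)) • (z n - z 0)‖ ≤ (γ/(2*(p^2*q^2))) * (2*D) := by
      rw [norm_smul, Real.norm_eq_abs, abs_of_nonneg hanchc, heq3]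
      exact mul_le_mul hanchle hz2D (norm_nonneg _)
        (div_nonneg (by linarith) (by positivity))
    -- put it together
    have hIH : ‖z (n+1) - z n‖ ≤ E/p^2 := by rw [hp2]; exact IH
    have hfin : ((q^2-53/50)/q^2)*(E/p^2) + (γ/(2*(p^2*q^2)))*(2*D) ≤ E/q^2 := by
      have hgap : γ*D ≤ (3/50)*E := by linarith
      have heqf : E/q^2 - (((q^2-53/50)/q^2)*(E/p^2) + (γ/(2*(p^2*q^2)))*(2*D))
          = ((3/50)*E - γ*D)/(p^2*q^2) := by
        rw [hq2p]; field_simp; ring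
      have h8 : (0:ℝ) ≤ ((3/50)*E - γ*D)/(p^2*q^2) :=
        div_nonneg (by linarith) (by positivity)
      linarith only [heqf, h8]
    have hcast2 : ((n+1:ℕ):ℝ) + γ = q^2 := by rw [hq2]; push_cast; ring
    rw [hcast2]
    calc ‖z (n+1+1) - z (n+1)‖
        ≤ ‖(p/q - β (n+1)) • (z (n+1) - z n) - α (n+1) • (G (z (n+1)) - G (z n))‖
          + ‖((p/q)*β n - β (n+1)) • (z n - z 0)‖ := htri
      _ ≤ ((q^2 - 53/50)/q^2) * ‖z (n+1) - z n‖ + (γ/(2*(p^2*q^2))) * (2*D) :=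
          add_le_add hule hanch
      _ ≤ ((q^2 - 53/50)/q^2) * (E/p^2) + (γ/(2*(p^2*q^2))) * (2*D) := by
          have := mul_le_mul_of_nonneg_left hIH hμ0
          linarith only [this]
      _ ≤ E/q^2 := hfin
end

section
/- For every real γ ≥ 2 and every natural number t ≥ 1, setting A = √((t + γ)/(t + 1 + γ)) − γ/(t + 1 + γ), one has √(A² + 1/(t + 1 + γ)) ≤ 1 − 1.15/(t + 1 + γ). -/
/-- **Contraction-factor bound.** For every real `γ ≥ 2` and natural `t ≥ 1`, with
`A = √((t+γ)/(t+1+γ)) − γ/(t+1+γ)`, one has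
`√(A² + 1/(t+1+γ)) ≤ 1 − 1.15/(t+1+γ)`. -/
theorem contraction_factor_bound (γ : ℝ) (hγ : 2 ≤ γ) (t : ℕ) (ht : 1 ≤ t)
    (A : ℝ)
    (hA : A = Real.sqrt (((t : ℝ) + γ) / ((t : ℝ) + 1 + γ)) - γ / ((t : ℝ) + 1 + γ)) :
    Real.sqrt (A ^ 2 + 1 / ((t : ℝ) + 1 + γ)) ≤ 1 - 1.15 / ((t : ℝ) + 1 + γ) := by
  have h0 : (1:ℝ) ≤ (t:ℝ) := by exact_mod_cast ht
  set s : ℝ := (t:ℝ) + 1 + γ with hs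
  have hs4 : 4 ≤ s := by simp only [hs]; linarith
  have hsγ : γ + 2 ≤ s := by simp only [hs]; linarith
  have hspos : (0:ℝ) < s := by linarith
  have hfrac : ((t : ℝ) + γ) / s = (s - 1) / s := by
    rw [hs]; ring_nf
  have hxnn : (0:ℝ) ≤ (s - 1) / s := div_nonneg (by linarith) (by linarith)
  set r := Real.sqrt ((s - 1) / s) with hr
  have hrnn : 0 ≤ r := Real.sqrt_nonneg _
  have hr2 : r ^ 2 = (s - 1) / s := Real.sq_sqrt hxnn
  have hrlow : 1 - 1 / s ≤ r := by
    have hle : (1 - 1 / s) ^ 2 ≤ (s - 1) / s := by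
      have hd : (s - 1) / s - (1 - 1 / s) ^ 2 = (s - 1) / s ^ 2 := by
        field_simp; ring
      have hnn : (0:ℝ) ≤ (s - 1) / s ^ 2 :=
        div_nonneg (by linarith) (by positivity)
      linarith
    calc 1 - 1 / s = Real.sqrt ((1 - 1 / s) ^ 2) := by
          rw [Real.sqrt_sq]
          rw [sub_nonneg, div_le_one hspos]; linarith
      _ ≤ r := Real.sqrt_le_sqrt hle
  have hA' : A = r - γ / s := by rw [hA, hfrac]
  have hmain : γ ^ 2 + 2.3 * s - 1.3225 ≤ 2 * s * r * γ := by
    have h1 : 2 * s * (1 - 1/s) * γ ≤ 2 * s * r * γ := by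
      have hγ0 : (0:ℝ) ≤ γ := by linarith
      have h2s : (0:ℝ) ≤ 2 * s := by linarith
      exact mul_le_mul_of_nonneg_right (mul_le_mul_of_nonneg_left hrlow h2s) hγ0
    have h2 : 2 * s * (1 - 1/s) * γ = 2 * s * γ - 2 * γ := by
      field_simp
    nlinarith [sq_nonneg (γ - 2), mul_nonneg (by linarith : (0:ℝ) ≤ γ - 2)
      (by linarith : (0:ℝ) ≤ s - γ - 2)]
  have key : A ^ 2 + 1 / s ≤ (1 - 1.15 / s) ^ 2 := by
    have expand : s ^ 2 * (A ^ 2 + 1 / s) = (s * r - γ) ^ 2 + s := by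
      rw [hA']; field_simp
    have hr2' : s ^ 2 * r ^ 2 = s ^ 2 - s := by
      rw [hr2]; field_simp
    have expand2 : s ^ 2 * ((1 - 1.15 / s) ^ 2) = (s - 1.15) ^ 2 := by
      field_simp
    have hmul : s ^ 2 * (A ^ 2 + 1 / s) ≤ s ^ 2 * ((1 - 1.15 / s) ^ 2) := by
      rw [expand, expand2]
      have e1 : (s * r - γ) ^ 2 + s = s ^ 2 * r ^ 2 - 2 * s * r * γ + γ ^ 2 + s := by
        ring
      have e2 : (s - 1.15) ^ 2 = s ^ 2 - 2.3 * s + 1.3225 := by norm_num; ring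
      rw [e1, e2, hr2']
      linarith
    exact le_of_mul_le_mul_left (by linarith) (by positivity : (0:ℝ) < s ^ 2)
  calc Real.sqrt (A ^ 2 + 1 / s) ≤ Real.sqrt ((1 - 1.15 / s) ^ 2) :=
        Real.sqrt_le_sqrt key
    _ = 1 - 1.15 / s := Real.sqrt_sq (by
        have h115 : (1.15:ℝ) / s ≤ 1 := by
          rw [div_le_one hspos]; linarith
        linarith)
end

section
/- For every real γ ≥ 2 and every natural number t ≥ 1, setting E_err = (1 − √((t + γ)/(t + 1 + γ))) · γ/(t + γ) + γ/(t + 1 + γ) − γ/(t + γ), one has |E_err| ≤ γ/(t + γ)². -/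
/-- **Error-coefficient bound.** For every real `γ ≥ 2` and natural `t ≥ 1`, with
`E_err = (1 − √((t+γ)/(t+1+γ))) · γ/(t+γ) + γ/(t+1+γ) − γ/(t+γ)`, one has
`|E_err| ≤ γ/(t+γ)²`. -/
theorem error_coefficient_bound (γ : ℝ) (hγ : 2 ≤ γ) (t : ℕ) (ht : 1 ≤ t)
    (Eerr : ℝ)
    (hE : Eerr = (1 - Real.sqrt (((t : ℝ) + γ) / ((t : ℝ) + 1 + γ))) * (γ / ((t : ℝ) + γ))
        + γ / ((t : ℝ) + 1 + γ) - γ / ((t : ℝ) + γ)) :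
    |Eerr| ≤ γ / ((t : ℝ) + γ) ^ 2 := by
  have ht' : (1:ℝ) ≤ (t : ℝ) := by exact_mod_cast ht
  set s : ℝ := (t : ℝ) + γ with hs
  have hrw : (t : ℝ) + 1 + γ = s + 1 := by rw [hs]; ring
  rw [hrw] at hE
  have hs0 : 0 < s := by rw [hs]; linarith
  have hs1 : 0 < s + 1 := by linarith
  have hγ0 : 0 < γ := by linarith
  have hrat : (0:ℝ) ≤ s / (s + 1) := by positivity
  set u : ℝ := Real.sqrt (s / (s + 1)) with hu
  have hsq_ge : s / (s + 1) ≤ u := by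
    have hle1 : s / (s + 1) ≤ 1 := by rw [div_le_one hs1]; linarith
    have hsq : (s / (s + 1)) ^ 2 ≤ s / (s + 1) := by
      nlinarith [mul_nonneg hrat (sub_nonneg.2 hle1)]
    calc s / (s + 1) = Real.sqrt ((s / (s + 1)) ^ 2) := (Real.sqrt_sq hrat).symm
      _ ≤ u := by rw [hu]; exact Real.sqrt_le_sqrt hsq
  have hsq_le : u ≤ 1 := by
    have hle1 : s / (s + 1) ≤ 1 := by rw [div_le_one hs1]; linarith
    have h := Real.sqrt_le_sqrt hle1
    rw [hu]; simpa [Real.sqrt_one] using h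
  have h1 : γ / (s + 1) ≤ u * (γ / s) := by
    have := mul_le_mul_of_nonneg_right hsq_ge (by positivity : (0:ℝ) ≤ γ / s)
    have heq : s / (s + 1) * (γ / s) = γ / (s + 1) := by
      field_simp
    linarith [heq ▸ this]
  have h2 : u * (γ / s) ≤ γ / s := by
    nlinarith [div_nonneg hγ0.le hs0.le]
  have key1 : γ / s - γ / (s + 1) ≤ γ / s ^ 2 := by
    rw [div_sub_div _ _ hs0.ne' hs1.ne', div_le_div_iff₀ (by positivity) (by positivity)]
    nlinarith
  have hEeq : Eerr = γ / (s + 1) - u * (γ / s) := by rw [hE]; ring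
  rw [abs_le]
  constructor
  · rw [hEeq]; linarith
  · rw [hEeq]
    have : (0:ℝ) ≤ γ / s ^ 2 := by positivity
    linarith
end

section
/- Let γ ≥ 2 be real, D ≥ 0, and let (d_t)_{t≥1} be a sequence of nonnegative reals satisfying d_{t+1} ≤ (1 − 1.15/(t + 1 + γ)) d_t + γD/(t + γ)² for all t ≥ 1. Then with E = max(d_1 (1 + γ), 20γD), one has d_t ≤ E/(t + γ) for all t ≥ 1. -/
/-- **Recurrence induction lemma.** Let `γ ≥ 2`, `D ≥ 0`, and let `(d t)` be nonnegative
for `t ≥ 1` with `d (t+1) ≤ (1 − 1.15/(t+1+γ)) d t + γD/(t+γ)²` for all `t ≥ 1`. Then with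
`E = max (d 1 * (1+γ)) (20γD)`, one has `d t ≤ E/(t+γ)` for all `t ≥ 1`. -/
theorem recurrence_induction (γ D : ℝ) (hγ : 2 ≤ γ) (hD : 0 ≤ D)
    (d : ℕ → ℝ) (hd : ∀ t : ℕ, 1 ≤ t → 0 ≤ d t)
    (hrec : ∀ t : ℕ, 1 ≤ t →
      d (t + 1) ≤ (1 - 1.15 / ((t : ℝ) + 1 + γ)) * d t + γ * D / ((t : ℝ) + γ) ^ 2)
    (E : ℝ) (hE : E = max (d 1 * (1 + γ)) (20 * γ * D)) :
    ∀ t : ℕ, 1 ≤ t → d t ≤ E / ((t : ℝ) + γ) := by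
  have hE0 : 0 ≤ E := by
    rw [hE]; exact le_trans (by positivity) (le_max_right _ _)
  have hE1 : d 1 * (1 + γ) ≤ E := hE ▸ le_max_left _ _
  have hE2 : 20 * γ * D ≤ E := hE ▸ le_max_right _ _
  refine Nat.le_induction ?_ ?_
  · rw [le_div_iff₀ (by push_cast; linarith)]
    push_cast; linarith
  · intro n hn ih
    have hrec' := hrec n hn
    have ha : (3 : ℝ) ≤ (n : ℝ) + γ := by
      have : (1 : ℝ) ≤ (n : ℝ) := by exact_mod_cast hn
      linarith
    set a : ℝ := (n : ℝ) + γ with hadef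
    have hcoef : (0 : ℝ) ≤ 1 - 1.15 / ((n : ℝ) + 1 + γ) := by
      have h1 : 1.15 / ((n : ℝ) + 1 + γ) ≤ 1.15 / 4 := by
        apply div_le_div_of_nonneg_left (by norm_num) (by norm_num)
        linarith
      linarith
    have hmul : (1 - 1.15 / ((n : ℝ) + 1 + γ)) * d n
        ≤ (1 - 1.15 / ((n : ℝ) + 1 + γ)) * (E / a) :=
      mul_le_mul_of_nonneg_left ih hcoef
    have hγD : γ * D / a ^ 2 ≤ E / (20 * a ^ 2) := by
      rw [div_le_div_iff₀ (by positivity) (by positivity)]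
      nlinarith [sq_nonneg a]
    have key : (1 - 1.15 / ((n : ℝ) + 1 + γ)) * (E / a) + E / (20 * a ^ 2)
        ≤ E / (a + 1) := by
      have hna : (n : ℝ) + 1 + γ = a + 1 := by rw [hadef]; ring
      rw [hna]
      have ha1 : (0 : ℝ) < a + 1 := by linarith
      have ha0 : (0 : ℝ) < a := by linarith
      rw [← sub_nonneg]
      have : E / (a + 1) - ((1 - 1.15 / (a + 1)) * (E / a) + E / (20 * a ^ 2))
          = E * (2 * a - 1) / (20 * a ^ 2 * (a + 1)) := by
        field_simp
        ring
      rw [this]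
      apply div_nonneg (by nlinarith) (by positivity)
    have hfin : d (n + 1) ≤ E / (a + 1) := by
      calc d (n + 1) ≤ (1 - 1.15 / ((n : ℝ) + 1 + γ)) * d n + γ * D / a ^ 2 := hrec'
        _ ≤ (1 - 1.15 / ((n : ℝ) + 1 + γ)) * (E / a) + E / (20 * a ^ 2) := by
            linarith
        _ ≤ E / (a + 1) := key
    have : ((n + 1 : ℕ) : ℝ) + γ = a + 1 := by push_cast; ring
    rw [this]
    exact hfin
end

section
/- Fix a real γ ≥ 2 and for each natural number t set E_err(t) = (1 − √((t + γ)/(t + 1 + γ))) · γ/(t + γ) + γ/(t + 1 + γ) − γ/(t + γ). Then (t + γ)² · E_err(t) converges to −γ/2 as t → ∞. -/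
/-!
With `x = t + γ`, rationalizing `1 - √(x/(x+1)) = 1 / ((x+1)(1 + √(x/(x+1))))` turns
`x² · E_err` into the closed form `γ · x/(x+1) · ((1 + √(x/(x+1)))⁻¹ - 1)`, which tends to
`γ · (1/2 - 1) = -γ/2` since `x/(x+1) → 1`.
-/

open Filter Topology

/-- The error coefficient `E_err` written in the variable `x = t + γ`. -/
noncomputable def errorCoeff (γ x : ℝ) : ℝ :=
  (1 - √(x / (x + 1))) * (γ / x) + γ / (x + 1) - γ / x

lemma tendsto_div_add_one_atTop : Tendsto (fun x : ℝ => x / (x + 1)) atTop (𝓝 1) := by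
  have h : Tendsto (fun x : ℝ => 1 - (x + 1)⁻¹) atTop (𝓝 (1 - 0)) :=
    tendsto_const_nhds.sub (tendsto_atTop_add_const_right _ 1 tendsto_id).inv_tendsto_atTop
  rw [sub_zero] at h
  refine h.congr' ?_
  filter_upwards [eventually_gt_atTop 0] with x hx
  field_simp
  ring

lemma sq_mul_errorCoeff {x : ℝ} (γ : ℝ) (hx : 0 < x) :
    x ^ 2 * errorCoeff γ x = γ * (x / (x + 1)) * ((1 + √(x / (x + 1)))⁻¹ - 1) := by
  have hr_sq : √(x / (x + 1)) ^ 2 = x / (x + 1) := Real.sq_sqrt (by positivity)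
  have hr0 : 0 ≤ √(x / (x + 1)) := Real.sqrt_nonneg _
  unfold errorCoeff
  generalize √(x / (x + 1)) = r at hr_sq hr0 ⊢
  have hsub : 1 - r = ((x + 1) * (1 + r))⁻¹ := by
    have hrel : (x + 1) * (1 - r ^ 2) = 1 := by rw [hr_sq]; field_simp; ring
    field_simp
    linear_combination hrel
  rw [hsub]
  field_simp
  ring

lemma tendsto_sq_mul_errorCoeff (γ : ℝ) :
    Tendsto (fun x : ℝ => x ^ 2 * errorCoeff γ x) atTop (𝓝 (-γ / 2)) := by
  have hu := tendsto_div_add_one_atTop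
  have hsqrt : Tendsto (fun x : ℝ => √(x / (x + 1))) atTop (𝓝 1) := by
    simpa using hu.sqrt
  have hlim : Tendsto (fun x : ℝ => γ * (x / (x + 1)) * ((1 + √(x / (x + 1)))⁻¹ - 1)) atTop
      (𝓝 (γ * 1 * ((1 + 1)⁻¹ - 1))) :=
    (tendsto_const_nhds.mul hu).mul
      (((tendsto_const_nhds.add hsqrt).inv₀ (by norm_num)).sub tendsto_const_nhds)
  rw [show γ * 1 * ((1 + 1 : ℝ)⁻¹ - 1) = -γ / 2 by ring] at hlim
  refine hlim.congr' ?_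
  filter_upwards [eventually_gt_atTop 0] with x hx
  exact (sq_mul_errorCoeff γ hx).symm

theorem error_coefficient_asymptotics_general (γ : ℝ) :
    Tendsto (fun t : ℕ =>
        ((t : ℝ) + γ) ^ 2 *
          ((1 - Real.sqrt (((t : ℝ) + γ) / ((t : ℝ) + 1 + γ))) * (γ / ((t : ℝ) + γ))
            + γ / ((t : ℝ) + 1 + γ) - γ / ((t : ℝ) + γ)))
      atTop (nhds (-γ / 2)) := by
  have h := (tendsto_sq_mul_errorCoeff γ).comp
    (tendsto_atTop_add_const_right _ γ tendsto_natCast_atTop_atTop)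
  simpa only [Function.comp_def, errorCoeff, add_right_comm _ γ 1] using h

/-- **Asymptotics of the error coefficient.** For `γ ≥ 2` and
`E_err t = (1 − √((t+γ)/(t+1+γ))) · γ/(t+γ) + γ/(t+1+γ) − γ/(t+γ)`, the rescaled error
`(t+γ)² · E_err t` converges to `−γ/2` as `t → ∞`. -/
theorem error_coefficient_asymptotics (γ : ℝ) (hγ : 2 ≤ γ) :
    Tendsto (fun t : ℕ =>
        ((t : ℝ) + γ) ^ 2 *
          ((1 - Real.sqrt (((t : ℝ) + γ) / ((t : ℝ) + 1 + γ))) * (γ / ((t : ℝ) + γ))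
            + γ / ((t : ℝ) + 1 + γ) - γ / ((t : ℝ) + γ)))
      atTop (nhds (-γ / 2)) :=
  error_coefficient_asymptotics_general γ
end

section
/- Fix a real γ ≥ 2 and for each natural number t set A(t) = √((t + γ)/(t + 1 + γ)) − γ/(t + 1 + γ). Then (t + γ) · (1 − √(A(t)² + 1/(t + 1 + γ))) converges to γ as t → ∞. -/
/-!
Write `x = t + γ` and `r = √(x/(x+1))`. Since `r² + 1/(x+1) = 1`, the squared contraction factor
`B = (r - γ/(x+1))² + 1/(x+1)` satisfies `1 - B = γ/(x+1) · (2r - γ/(x+1))`, so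
`x (1 - √B) = x (1 - B) / (1 + √B) → γ · 2 / 2 = γ`.
-/

open Filter Topology

lemma one_sub_sqrt_eq_div {b : ℝ} (hb : 0 ≤ b) : 1 - √b = (1 - b) / (1 + √b) := by
  rw [eq_div_iff (by positivity)]
  linear_combination -Real.sq_sqrt hb

lemma tendsto_const_div_add_one_atTop (c : ℝ) :
    Tendsto (fun x : ℝ => c / (x + 1)) atTop (𝓝 0) :=
  tendsto_const_nhds.div_atTop (tendsto_atTop_add_const_right _ 1 tendsto_id)

lemma tendsto_sqrt_div_add_one_atTop :
    Tendsto (fun x : ℝ => √(x / (x + 1))) atTop (𝓝 1) := by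
  simpa using tendsto_div_add_one_atTop.sqrt

/-- `A(t)² + 1/(t + 1 + γ)` as a function of `x = t + γ`. -/
noncomputable def contractionSq (γ x : ℝ) : ℝ :=
  (√(x / (x + 1)) - γ / (x + 1)) ^ 2 + 1 / (x + 1)

lemma contractionSq_nonneg (γ : ℝ) {x : ℝ} (hx : 0 ≤ x) : 0 ≤ contractionSq γ x := by
  unfold contractionSq
  positivity

lemma mul_one_sub_contractionSq (γ : ℝ) {x : ℝ} (hx : 0 ≤ x) :
    x * (1 - contractionSq γ x) = γ * (x / (x + 1)) * (2 * √(x / (x + 1)) - γ / (x + 1)) := by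
  have hx1 : x + 1 ≠ 0 := by positivity
  have hr : √(x / (x + 1)) ^ 2 = x / (x + 1) := Real.sq_sqrt (by positivity)
  unfold contractionSq
  generalize √(x / (x + 1)) = r at hr ⊢
  rw [eq_div_iff hx1] at hr
  field_simp
  linear_combination -x * (x + 1) * hr

lemma tendsto_contractionSq (γ : ℝ) : Tendsto (contractionSq γ) atTop (𝓝 1) := by
  have h := ((tendsto_sqrt_div_add_one_atTop.sub (tendsto_const_div_add_one_atTop γ)).pow 2).add
    (tendsto_const_div_add_one_atTop 1)
  rwa [sub_zero, one_pow, add_zero] at h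

theorem tendsto_mul_one_sub_sqrt_contractionSq (γ : ℝ) :
    Tendsto (fun x => x * (1 - √(contractionSq γ x))) atTop (𝓝 γ) := by
  have hlim := ((tendsto_div_add_one_atTop.const_mul γ).mul
      ((tendsto_sqrt_div_add_one_atTop.const_mul 2).sub (tendsto_const_div_add_one_atTop γ))).div
    ((tendsto_contractionSq γ).sqrt.const_add 1) (by norm_num)
  rw [show γ * 1 * (2 * 1 - 0) / (1 + √1) = γ by norm_num] at hlim
  refine hlim.congr' ?_
  filter_upwards [eventually_ge_atTop 0] with x hx
  rw [Pi.div_apply, one_sub_sqrt_eq_div (contractionSq_nonneg γ hx),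
    ← mul_one_sub_contractionSq γ hx, mul_div_assoc]

theorem contraction_factor_asymptotics_general (γ : ℝ) :
    Tendsto (fun t : ℕ =>
        ((t : ℝ) + γ) *
          (1 - Real.sqrt
            ((Real.sqrt (((t : ℝ) + γ) / ((t : ℝ) + 1 + γ)) - γ / ((t : ℝ) + 1 + γ)) ^ 2
              + 1 / ((t : ℝ) + 1 + γ))))
      atTop (nhds γ) := by
  have hx : Tendsto (fun t : ℕ => (t : ℝ) + γ) atTop atTop :=
    tendsto_atTop_add_const_right _ γ tendsto_natCast_atTop_atTop
  refine ((tendsto_mul_one_sub_sqrt_contractionSq γ).comp hx).congr fun t => ?_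
  rw [Function.comp_apply, contractionSq, add_right_comm (t : ℝ) γ 1]

/-- **Asymptotics of the contraction factor.** For `γ ≥ 2` and
`A t = √((t+γ)/(t+1+γ)) − γ/(t+1+γ)`, the quantity
`(t+γ)(1 − √(A t² + 1/(t+1+γ)))` converges to `γ` as `t → ∞`. -/
theorem contraction_factor_asymptotics (γ : ℝ) (hγ : 2 ≤ γ) :
    Tendsto (fun t : ℕ =>
        ((t : ℝ) + γ) *
          (1 - Real.sqrt
            ((Real.sqrt (((t : ℝ) + γ) / ((t : ℝ) + 1 + γ)) - γ / ((t : ℝ) + 1 + γ)) ^ 2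
              + 1 / ((t : ℝ) + 1 + γ))))
      atTop (nhds γ) :=
  contraction_factor_asymptotics_general γ
end

section
/- Under the stated assumptions and parameter schedules, the squared gradient norms of the Anchored GDA iterates converge to zero: ‖G(z_t)‖² → 0 as t → ∞. -/
open Filter
open scoped RealInnerProductSpace


set_option maxHeartbeats 1000000 in
private lemma anchored_core (s s' γ R N P Y W QQ D2 : ℝ)
    (h1 : 1 ≤ s) (h2 : 2 ≤ γ) (h3 : γ ≤ s^2)
    (h4 : s'^2 = s^2 + 1) (h5 : s ≤ s')
    (h7 : 0 ≤ R)
    (h8 : 0 ≤ N) (h9 : N ≤ 64*R^2)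
    (h10 : -(72*R^2) ≤ P) (h11 : P ≤ 72*R^2)
    (h12 : 0 ≤ D2) (h13 : D2 ≤ 81*R^2)
    (h14 : 0 ≤ QQ)
    (h15 : s*Y + γ*W ≤ 0)
    (h16 : s^4*QQ ≤ s^2*N + 2*γ*s*P + γ^2*D2)
    (h17 : Y^2 ≤ QQ*N) :
    s^4*s'^2*(N + 2*Y + QQ) + 2*γ*s'*(s^2*(s^2 - γ)*(P + W) - s^3*(N + Y))
      ≤ s^6*N + 2*γ*s^5*P + 2000*γ^3*R^2*s^3 := by
  have hs0 : (0:ℝ) < s := by linarith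
  have hs'0 : (0:ℝ) < s' := by linarith
  have hγ0 : (0:ℝ) < γ := by linarith
  have hR2 : (0:ℝ) ≤ R^2 := sq_nonneg R
  have hss : s ≤ s^2 := by linarith only [mul_le_mul_of_nonneg_left h1 hs0.le]
  have hs21 : (1:ℝ) ≤ s^2 := by linarith only [h1, hss]
  have hs2s4 : s^2 ≤ s^4 := by linarith only [mul_le_mul_of_nonneg_left hs21 (sq_nonneg s)]
  have hss3 : s ≤ s^3 := by linarith only [mul_le_mul_of_nonneg_left hs21 hs0.le]
  have hs23 : s^2 ≤ s^3 := by linarith only [mul_le_mul_of_nonneg_left h1 (sq_nonneg s)]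
  have hγ4 : (4:ℝ) ≤ γ^2 := by
    linarith only [mul_le_mul_of_nonneg_left h2 hγ0.le, h2]
  have hs'1 : s' ≤ s + 1 :=
    le_of_sq_le_sq (by linarith only [h4, hs0.le] : s'^2 ≤ (s+1)^2) (by linarith)
  have hs'2s : s' ≤ 2*s := by linarith
  -- (a) |s*Y| ≤ 104 γ R²
  have e9 : s^2*N ≤ 64*R^2*s^2 := by
    linarith only [mul_le_mul_of_nonneg_left h9 (sq_nonneg s)]
  have e11 : 2*γ*s*P ≤ 144*γ*R^2*s := by
    linarith only [mul_le_mul_of_nonneg_left h11 (by positivity : (0:ℝ) ≤ 2*γ*s)]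
  have e13 : γ^2*D2 ≤ 81*γ^2*R^2 := by
    linarith only [mul_le_mul_of_nonneg_left h13 (sq_nonneg γ)]
  have q1 : 64*R^2*s^2 ≤ 16*γ^2*R^2*s^2 := by
    linarith only [mul_nonneg (mul_nonneg (by linarith only [hγ4] : (0:ℝ) ≤ γ^2 - 4) hR2)
      (sq_nonneg s)]
  have q2 : 144*γ*R^2*s ≤ 72*γ^2*R^2*s^2 := by
    have qq : 2*s ≤ γ*s^2 := by
      linarith only [hss, mul_nonneg (by linarith : (0:ℝ) ≤ γ-2) (sq_nonneg s)]
    linarith only [mul_le_mul_of_nonneg_left qq (by positivity : (0:ℝ) ≤ 72*γ*R^2)]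
  have q3 : 81*γ^2*R^2 ≤ 81*γ^2*R^2*s^2 := by
    linarith only [mul_le_mul_of_nonneg_left hs21 (by positivity : (0:ℝ) ≤ 81*γ^2*R^2)]
  have hq4 : s^4*QQ ≤ 169*γ^2*R^2*s^2 := by linarith only [h16, e9, e11, e13, q1, q2, q3]
  have hsQQ : s^2*QQ ≤ 169*γ^2*R^2 :=
    le_of_mul_le_mul_right (by linarith only [hq4]) (by positivity : (0:ℝ) < s^2)
  have m1 : s^2*Y^2 ≤ (s^2*QQ)*N := by
    linarith only [mul_le_mul_of_nonneg_left h17 (sq_nonneg s)]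
  have m2 : (s^2*QQ)*N ≤ 169*γ^2*R^2*N := mul_le_mul_of_nonneg_right hsQQ h8
  have m3 : 169*γ^2*R^2*N ≤ 169*γ^2*R^2*(64*R^2) :=
    mul_le_mul_of_nonneg_left h9 (by positivity)
  have hY1 : (s*Y)^2 ≤ (104*γ*R^2)^2 := by linarith only [m1, m2, m3]
  have hYabs := abs_le_of_sq_le_sq' hY1 (by positivity)
  have hYu : s*Y ≤ 104*γ*R^2 := hYabs.2
  -- (b) anchor coefficient in [0,1]
  have hc0 : 0 ≤ s'*(s'-s) := mul_nonneg hs'0.le (by linarith)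
  have hc1 : s'*(s'-s) ≤ 1 := by
    linarith only [mul_le_mul_of_nonneg_left h5 hs0.le, h4]
  -- (c) W elimination
  have hc2 : (0:ℝ) ≤ 2*s'*(s^2*(s^2-γ)) :=
    mul_nonneg (by linarith) (mul_nonneg (sq_nonneg s) (by linarith))
  have hWterm : 2*γ*s'*(s^2*(s^2-γ))*W ≤ -(2*s'*(s^2*(s^2-γ))*(s*Y)) := by
    linarith only [mul_le_mul_of_nonneg_left h15 hc2]
  -- QQ expansion
  have hQQ' : s^4*s'^2*QQ ≤ s'^2*(s^2*N + 2*γ*s*P + γ^2*D2) := by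
    linarith only [mul_le_mul_of_nonneg_left h16 (sq_nonneg s')]
  -- (i) N coefficient
  have h4a : s^4*s'^2 = s^6 + s^4 := by rw [h4]; ring
  have h4b : s'^2*s^2 = s^4 + s^2 := by rw [h4]; ring
  have h4c : 2*γ*(s'^2*s) = 2*γ*s^3 + 2*γ*s := by rw [h4]; ring
  have hnn : (0:ℝ) ≤ s^3*s' := by positivity
  have cia : s^4 ≤ s^3*s' := by
    linarith only [mul_le_mul_of_nonneg_left h5 (by positivity : (0:ℝ) ≤ s^3)]
  have cic : 4*(s^3*s') ≤ 2*γ*(s^3*s') := by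
    linarith only [mul_le_mul_of_nonneg_left (by linarith : (4:ℝ) ≤ 2*γ) hnn]
  have ci : s^4*s'^2 + s'^2*s^2 - 2*γ*s'*s^3 ≤ s^6 := by
    linarith only [h4a, h4b, cia, cic, hs2s4, hnn]
  have p1 : (s^4*s'^2 + s'^2*s^2 - 2*γ*s'*s^3)*N ≤ s^6*N := mul_le_mul_of_nonneg_right ci h8
  -- (Y) term
  have hY3 : (s'*(s'-s))*(s*Y) ≤ 104*γ*R^2 := by
    linarith only [mul_le_mul_of_nonneg_left hYu hc0,
      mul_le_mul_of_nonneg_right hc1 (by positivity : (0:ℝ) ≤ 104*γ*R^2)]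
  have p2 : 2*s^4*s'*(s'-s)*Y ≤ 208*γ*R^2*s^3 := by
    linarith only [mul_le_mul_of_nonneg_left hY3 (by positivity : (0:ℝ) ≤ 2*s^3)]
  -- (ii) P coefficient
  have hds : 2*s*(s'-s) ≤ 1 := by linarith only [sq_nonneg (s'-s), h4]
  have cpa' : 2*γ*s^4*s' - 2*γ*s^5 ≤ γ*s^3 := by
    linarith only [mul_le_mul_of_nonneg_left hds (by positivity : (0:ℝ) ≤ γ*s^3)]
  have cpb' : 2*γ^2*s^2*s' ≤ 4*γ^2*s^3 := by
    linarith only [mul_le_mul_of_nonneg_left hs'2s (by positivity : (0:ℝ) ≤ 2*γ^2*s^2)]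
  have cpc' : 2*γ^2*s^3 ≤ 2*γ^2*s^2*s' := by
    linarith only [mul_le_mul_of_nonneg_left h5 (by positivity : (0:ℝ) ≤ 2*γ^2*s^2)]
  have cpd' : 2*γ*s ≤ 2*γ*s^3 := by
    linarith only [mul_le_mul_of_nonneg_left hss3 (by positivity : (0:ℝ) ≤ 2*γ)]
  have cpe : 2*γ*s^5 ≤ 2*γ*s^4*s' := by
    linarith only [mul_le_mul_of_nonneg_left h5 (by positivity : (0:ℝ) ≤ 2*γ*s^4)]
  have cγ : 5*γ*s^3 ≤ 6*γ^2*s^3 := by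
    linarith only [mul_nonneg (mul_nonneg hγ0.le (by linarith : (0:ℝ) ≤ 6*γ-5))
      (by positivity : (0:ℝ) ≤ s^3)]
  have cP_up : (2*γ*s'*(s^2*(s^2-γ)) + 2*γ*s'^2*s) - 2*γ*s^5 ≤ 4*γ^2*s^3 := by
    linarith only [cpa', cpc', cpd', h4c, cγ]
  have cP_lo : -(4*γ^2*s^3) ≤ (2*γ*s'*(s^2*(s^2-γ)) + 2*γ*s'^2*s) - 2*γ*s^5 := by
    linarith only [cpe, cpb', h4c, mul_pos hγ0 hs0,
      mul_pos hγ0 (mul_pos hs0 (mul_pos hs0 hs0))]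
  have p3 : (2*γ*s'*(s^2*(s^2-γ)) + 2*γ*s'^2*s)*P ≤ 2*γ*s^5*P + 504*γ^2*R^2*s^3 := by
    linarith only [mul_nonneg (by linarith only [cP_up] :
        (0:ℝ) ≤ 4*γ^2*s^3 - ((2*γ*s'*(s^2*(s^2-γ)) + 2*γ*s'^2*s) - 2*γ*s^5))
        (by linarith only [h10] : (0:ℝ) ≤ P + 72*R^2),
      mul_nonneg (by linarith only [cP_lo] :
        (0:ℝ) ≤ (2*γ*s'*(s^2*(s^2-γ)) + 2*γ*s'^2*s) - 2*γ*s^5 + 4*γ^2*s^3)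
        (by linarith only [h11] : (0:ℝ) ≤ 72*R^2 - P),
      mul_nonneg (mul_nonneg (sq_nonneg γ) hR2) (by positivity : (0:ℝ) ≤ s^3)]
  -- (D2) term
  have p4 : γ^2*s'^2*D2 ≤ 162*γ^2*R^2*s^3 := by
    have r1 : γ^2*s'^2*D2 ≤ γ^2*s'^2*(81*R^2) :=
      mul_le_mul_of_nonneg_left h13 (by positivity)
    have rs : s'^2 ≤ 2*s^2 := by linarith only [h4, hs21]
    have r2 : γ^2*s'^2*(81*R^2) ≤ γ^2*(2*s^2)*(81*R^2) := by
      linarith only [mul_le_mul_of_nonneg_left rs (by positivity : (0:ℝ) ≤ 81*γ^2*R^2)]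
    have r3 : γ^2*(2*s^2)*(81*R^2) ≤ 162*γ^2*R^2*s^3 := by
      linarith only [mul_le_mul_of_nonneg_left hs23 (by positivity : (0:ℝ) ≤ 162*γ^2*R^2)]
    linarith only [r1, r2, r3]
  -- final constant comparison
  have pc : (208*γ + 504*γ^2 + 162*γ^2)*(R^2*s^3) ≤ 2000*γ^3*(R^2*s^3) := by
    have g1 : 208*γ ≤ 52*γ^3 := by
      linarith only [mul_le_mul_of_nonneg_left hγ4 hγ0.le]
    have g2 : 666*γ^2 ≤ 333*γ^3 := by
      linarith only [mul_le_mul_of_nonneg_left h2 (sq_nonneg γ)]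
    have c1 : 208*γ + 666*γ^2 ≤ 2000*γ^3 := by
      linarith only [g1, g2, pow_pos hγ0 3]
    linarith only [mul_le_mul_of_nonneg_right c1 (by positivity : (0:ℝ) ≤ R^2*s^3)]
  linarith only [hWterm, hQQ', p1, p2, p3, p4, pc]


private lemma anchored_scalar_bnd (u w R I1 I2 X Ng : ℝ)
    (hu0 : 0 < u) (hu1 : u ≤ 1) (hw0 : 0 < w) (hw1 : w ≤ 1) (huw : 2 * u^2 ≤ w)
    (hR0 : 0 ≤ R) (hI1 : 0 ≤ I1) (hI2 : -(8 * R^2) ≤ I2)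
    (hX0 : 0 ≤ X) (hX : X ≤ (1 - w) * (8 * R) + w * R)
    (hNg0 : 0 ≤ Ng) (hNg : Ng ≤ 8 * R) :
    X^2 - 2 * (u * ((1 - w) * I1 + w * I2)) + (u * Ng)^2 ≤ 64 * R^2 := by
  have h1w : (0:ℝ) ≤ 1 - w := by linarith
  have hX2 : X^2 ≤ (8 - 7*w)^2 * R^2 := by nlinarith
  have hA : 0 ≤ u * (1-w) * I1 := mul_nonneg (mul_nonneg hu0.le h1w) hI1
  have h2 : -2 * (u * ((1 - w) * I1 + w * I2)) ≤ 16 * (u*w) * R^2 := by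
    nlinarith [mul_le_mul_of_nonneg_left hI2 (le_of_lt (mul_pos hu0 hw0))]
  have hNgsq : Ng^2 ≤ 64 * R^2 := by nlinarith
  have h3 : (u * Ng)^2 ≤ 64 * u^2 * R^2 := by
    nlinarith [mul_le_mul_of_nonneg_left hNgsq (sq_nonneg u)]
  have huw1 : u * w ≤ w := by nlinarith
  have hw2 : w^2 ≤ w := by nlinarith
  have hu2 : 64 * u^2 ≤ 32 * w := by nlinarith
  nlinarith [mul_le_mul_of_nonneg_right huw1 (sq_nonneg R),
    mul_le_mul_of_nonneg_right hw2 (sq_nonneg R),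
    mul_le_mul_of_nonneg_right hu2 (sq_nonneg R),
    mul_nonneg hw0.le (sq_nonneg R)]

set_option maxHeartbeats 1000000 in
theorem anchored_bound {H : Type*} [NormedAddCommGroup H] [InnerProductSpace ℝ H]
    (G : H → H)
    (hmono : ∀ z w : H, 0 ≤ ⟪G z - G w, z - w⟫)
    (hlip : ∀ z w : H, ‖G z - G w‖ ≤ ‖z - w‖)
    (zstar : H) (hzstar : G zstar = 0)
    (γ : ℝ) (hγ : 2 ≤ γ)
    (z : ℕ → H)
    (hstep : ∀ t : ℕ, z (t + 1) = z t - (Real.sqrt ((t : ℝ) + γ))⁻¹ • G (z t)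
      + (γ / ((t : ℝ) + γ)) • (z 0 - z t)) :
    ∀ t : ℕ, ‖z t - zstar‖ ≤ 8 * ‖z 0 - zstar‖ := by
  have hR0 : 0 ≤ ‖z 0 - zstar‖ := norm_nonneg _
  set R := ‖z 0 - zstar‖ with hR
  intro t
  induction t with
  | zero => linarith
  | succ t ih =>
    set s : ℝ := Real.sqrt ((t : ℝ) + γ) with hsdef
    have ht0 : (0:ℝ) ≤ (t:ℝ) := Nat.cast_nonneg t
    have hτ2 : (2:ℝ) ≤ (t : ℝ) + γ := by linarith
    have hs2 : s ^ 2 = (t : ℝ) + γ := Real.sq_sqrt (by linarith)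
    have hs1 : 1 ≤ s := by nlinarith [Real.sqrt_nonneg ((t : ℝ) + γ)]
    have hs0 : 0 < s := by linarith
    have hγs : γ ≤ s ^ 2 := by nlinarith
    set g : H := G (z t) with hg
    have hgn : ‖g‖ ≤ 8 * R := by
      have h1 := hlip (z t) zstar
      rw [hzstar, sub_zero] at h1
      exact h1.trans ih
    have hmono1 : 0 ≤ ⟪z t - zstar, g⟫ := by
      have := hmono (z t) zstar
      rw [hzstar, sub_zero] at this
      rwa [real_inner_comm]
    have hinner2 : -(8 * R^2) ≤ ⟪z 0 - zstar, g⟫ := by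
      have h1 : |⟪z 0 - zstar, g⟫| ≤ ‖z 0 - zstar‖ * ‖g‖ := abs_real_inner_le_norm _ _
      have := abs_le.mp h1
      nlinarith [this.1]
    set v : H := (1 - γ / s ^ 2) • (z t - zstar) + (γ / s ^ 2) • (z 0 - zstar) with hv
    have hz1 : z (t+1) - zstar = v - s⁻¹ • g := by
      rw [hv, hstep t, ← hsdef, ← hs2, hg]
      module
    have hw0' : (0:ℝ) < γ / s^2 := by positivity
    have h1w : (0:ℝ) ≤ 1 - γ / s^2 := by
      rw [sub_nonneg, div_le_one (by positivity)]; exact hγs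
    have hnv : ‖v‖ ≤ (1 - γ / s^2) * (8*R) + (γ / s^2) * R := by
      refine (norm_add_le _ _).trans ?_
      rw [norm_smul, norm_smul, Real.norm_eq_abs, Real.norm_eq_abs,
        abs_of_nonneg h1w, abs_of_nonneg (le_of_lt hw0')]
      gcongr
    have hvg : ⟪v, s⁻¹ • g⟫ = s⁻¹ * ((1 - γ / s^2) * ⟪z t - zstar, g⟫
        + (γ / s^2) * ⟪z 0 - zstar, g⟫) := by
      rw [hv]
      simp only [inner_add_left, real_inner_smul_left, real_inner_smul_right]
      all_goals ring
    have hexp : ‖z (t+1) - zstar‖^2 = ‖v‖^2 - 2 * ⟪v, s⁻¹ • g⟫ + ‖s⁻¹ • g‖^2 := by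
      rw [hz1]; exact norm_sub_sq_real v _
    have hng : ‖s⁻¹ • g‖ = s⁻¹ * ‖g‖ := by
      rw [norm_smul, Real.norm_eq_abs, abs_of_nonneg (by positivity)]
    have hu1 : s⁻¹ ≤ 1 := by
      rw [inv_le_one_iff₀]; right; exact hs1
    have hu0 : 0 < s⁻¹ := by positivity
    have hw1 : γ / s^2 ≤ 1 := by
      rw [div_le_one (by positivity)]; exact hγs
    have huw : 2 * (s⁻¹)^2 ≤ γ / s^2 := by
      rw [le_div_iff₀ (by positivity)]
      have h5 : (s⁻¹)^2 * s^2 = 1 := by field_simp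
      nlinarith
    have hkey : ‖z (t+1) - zstar‖^2 ≤ 64 * R^2 := by
      rw [hexp, hvg, hng]
      exact anchored_scalar_bnd s⁻¹ (γ/s^2) R ⟪z t - zstar, g⟫ ⟪z 0 - zstar, g⟫ ‖v‖ ‖g‖
        hu0 hu1 hw0' hw1 huw hR0 hmono1 hinner2 (norm_nonneg v) hnv (norm_nonneg g) hgn
    have h8 : (0:ℝ) ≤ 8 * R := by linarith
    exact (pow_le_pow_iff_left₀ (norm_nonneg _) h8 two_ne_zero).mp (by nlinarith)

set_option maxHeartbeats 1000000 in
private lemma anchored_step {H : Type*} [NormedAddCommGroup H] [InnerProductSpace ℝ H]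
    (G : H → H)
    (hmono : ∀ z w : H, 0 ≤ ⟪G z - G w, z - w⟫)
    (hlip : ∀ z w : H, ‖G z - G w‖ ≤ ‖z - w‖)
    (zstar : H) (hzstar : G zstar = 0)
    (γ : ℝ) (hγ : 2 ≤ γ)
    (z : ℕ → H)
    (hstep : ∀ t : ℕ, z (t + 1) = z t - (Real.sqrt ((t : ℝ) + γ))⁻¹ • G (z t)
      + (γ / ((t : ℝ) + γ)) • (z 0 - z t))
    (hb : ∀ t : ℕ, ‖z t - zstar‖ ≤ 8 * ‖z 0 - zstar‖) (t : ℕ) :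
    ((t : ℝ) + 1 + γ) * ‖G (z (t+1))‖^2
      + 2*γ*Real.sqrt ((t : ℝ) + 1 + γ) * ⟪G (z (t+1)), z (t+1) - z 0⟫
    ≤ ((t : ℝ) + γ) * ‖G (z t)‖^2 + 2*γ*Real.sqrt ((t : ℝ) + γ) * ⟪G (z t), z t - z 0⟫
      + 2000*γ^3*‖z 0 - zstar‖^2 / Real.sqrt ((t : ℝ) + γ) := by
  have hR0 : 0 ≤ ‖z 0 - zstar‖ := norm_nonneg _
  set R := ‖z 0 - zstar‖ with hRdef
  have ht0 : (0:ℝ) ≤ (t:ℝ) := Nat.cast_nonneg t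
  set s : ℝ := Real.sqrt ((t : ℝ) + γ) with hsdef
  set s' : ℝ := Real.sqrt ((t : ℝ) + 1 + γ) with hs'def
  have hτ2 : (2:ℝ) ≤ (t : ℝ) + γ := by linarith
  have hs2 : s ^ 2 = (t : ℝ) + γ := Real.sq_sqrt (by linarith)
  have hs'2 : s' ^ 2 = (t : ℝ) + 1 + γ := Real.sq_sqrt (by linarith)
  have h4 : s'^2 = s^2 + 1 := by rw [hs2, hs'2]; ring
  have hs1 : 1 ≤ s := by nlinarith [Real.sqrt_nonneg ((t : ℝ) + γ), hs2]
  have hs0 : 0 < s := by linarith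
  have hsne : s ≠ 0 := ne_of_gt hs0
  have h5 : s ≤ s' := Real.sqrt_le_sqrt (by linarith)
  have hγs : γ ≤ s ^ 2 := by rw [hs2]; linarith
  -- abbreviations (plain defs)
  have hz1 : z (t+1) - z t = -(s⁻¹ • G (z t)) - (γ/s^2) • (z t - z 0) := by
    rw [hstep t, ← hsdef, ← hs2]
    module
  have hz2 : z (t+1) - z 0 = (1 - γ/s^2) • (z t - z 0) - s⁻¹ • G (z t) := by
    rw [hstep t, ← hsdef, ← hs2]
    module
  have hq : G (z (t+1)) = G (z t) + (G (z (t+1)) - G (z t)) := by abel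
  -- scalar abbreviations
  set g : H := G (z t) with hg
  set gh : H := G (z (t+1)) with hgh
  set q : H := gh - g with hqdef
  set d : H := z t - z 0 with hddef
  -- norm/inner expansions
  have hN' : ‖gh‖^2 = ‖g‖^2 + 2*⟪q, g⟫ + ‖q‖^2 := by
    rw [show gh = g + q by rw [hqdef]; abel, norm_add_sq_real, real_inner_comm g q]
  have hP' : ⟪gh, z (t+1) - z 0⟫
      = (1 - γ/s^2)*(⟪g, d⟫ + ⟪q, d⟫) - s⁻¹*(‖g‖^2 + ⟪q, g⟫) := by
    rw [hz2, show gh = g + q by rw [hqdef]; abel]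
    simp only [inner_add_left, inner_sub_right, real_inner_smul_right,
      real_inner_self_eq_norm_sq]
    ring
  -- monotonicity
  have hM : s*⟪q, g⟫ + γ*⟪q, d⟫ ≤ 0 := by
    have hm := hmono (z (t+1)) (z t)
    rw [hz1] at hm
    simp only [← hqdef, inner_sub_right, inner_neg_right, real_inner_smul_right] at hm
    have hm2 : s⁻¹*⟪q, g⟫ + (γ/s^2)*⟪q, d⟫ ≤ 0 := by linarith
    have hid : s^2*(s⁻¹*⟪q, g⟫ + (γ/s^2)*⟪q, d⟫) = s*⟪q, g⟫ + γ*⟪q, d⟫ := by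
      field_simp
    have := mul_le_mul_of_nonneg_left hm2 (sq_nonneg s)
    rw [hid] at this
    linarith [this]
  -- Lipschitz
  have hL : s^4*‖q‖^2 ≤ s^2*‖g‖^2 + 2*γ*s*⟪g, d⟫ + γ^2*‖d‖^2 := by
    have hlq : ‖q‖ ≤ ‖z (t+1) - z t‖ := hlip (z (t+1)) (z t)
    have hΔ : ‖z (t+1) - z t‖^2 = s⁻¹^2*‖g‖^2 + 2*(s⁻¹*(γ/s^2))*⟪g, d⟫ + (γ/s^2)^2*‖d‖^2 := by
      rw [hz1, show -(s⁻¹ • g) - (γ/s^2) • d = -((s⁻¹ • g) + (γ/s^2) • d) by abel, norm_neg,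
        norm_add_sq_real, real_inner_smul_left, real_inner_smul_right, norm_smul, norm_smul]
      simp [Real.norm_eq_abs, abs_of_nonneg (by positivity : (0:ℝ) ≤ s⁻¹),
        abs_of_nonneg (by positivity : (0:ℝ) ≤ γ/s^2), mul_pow]
      rw [abs_of_nonneg (show (0:ℝ) ≤ γ by linarith)]
      ring
    have hq2 : ‖q‖^2 ≤ ‖z (t+1) - z t‖^2 :=
      pow_le_pow_left₀ (norm_nonneg q) hlq 2
    have e1 : s^4*(s⁻¹^2*‖g‖^2 + 2*(s⁻¹*(γ/s^2))*⟪g, d⟫ + (γ/s^2)^2*‖d‖^2)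
        = s^2*‖g‖^2 + 2*γ*s*⟪g, d⟫ + γ^2*‖d‖^2 := by
      field_simp
    calc s^4*‖q‖^2 ≤ s^4*‖z (t+1) - z t‖^2 :=
          mul_le_mul_of_nonneg_left hq2 (by positivity)
      _ = s^2*‖g‖^2 + 2*γ*s*⟪g, d⟫ + γ^2*‖d‖^2 := by rw [hΔ]; exact e1
  -- Cauchy-Schwarz
  have hY2 : ⟪q, g⟫^2 ≤ ‖q‖^2*‖g‖^2 := by
    have h0 := abs_real_inner_le_norm q g
    calc ⟪q, g⟫^2 = |⟪q, g⟫| * |⟪q, g⟫| := by rw [abs_mul_abs_self]; ring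
      _ ≤ (‖q‖*‖g‖)*(‖q‖*‖g‖) := mul_self_le_mul_self (abs_nonneg _) h0
      _ = ‖q‖^2*‖g‖^2 := by ring
  -- norm bounds
  have hgn : ‖g‖ ≤ 8*R := by
    have h1 := hlip (z t) zstar
    rw [hzstar, sub_zero] at h1
    exact h1.trans (hb t)
  have hN9 : ‖g‖^2 ≤ 64*R^2 := by nlinarith [norm_nonneg g]
  have hd9 : ‖d‖ ≤ 9*R := by
    have : d = (z t - zstar) - (z 0 - zstar) := by rw [hddef]; abel
    rw [this]
    calc ‖(z t - zstar) - (z 0 - zstar)‖ ≤ ‖z t - zstar‖ + ‖z 0 - zstar‖ := norm_sub_le _ _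
      _ ≤ 8*R + R := by have := hb t; rw [← hRdef]; linarith
      _ = 9*R := by ring
  have hD2 : ‖d‖^2 ≤ 81*R^2 := by nlinarith [norm_nonneg d]
  have hPabs : |⟪g, d⟫| ≤ 72*R^2 := by
    calc |⟪g, d⟫| ≤ ‖g‖*‖d‖ := abs_real_inner_le_norm g d
      _ ≤ (8*R)*(9*R) := mul_le_mul hgn hd9 (norm_nonneg d) (by linarith)
      _ = 72*R^2 := by ring
  have hPu := (abs_le.mp hPabs).2
  have hPl := (abs_le.mp hPabs).1
  -- apply the core inequality
  have key := anchored_core s s' γ R (‖g‖^2) (⟪g, d⟫) (⟪q, g⟫) (⟪q, d⟫) (‖q‖^2) (‖d‖^2)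
    hs1 hγ hγs h4 h5 hR0 (sq_nonneg _) hN9 (by linarith) hPu (sq_nonneg _) hD2
    (sq_nonneg _) hM hL hY2
  -- convert
  rw [show (t:ℝ) + 1 + γ = s'^2 from hs'2.symm, show (t:ℝ) + γ = s^2 from hs2.symm,
    hN', hP']
  refine le_of_mul_le_mul_right ?_ (show (0:ℝ) < s^4 by positivity)
  calc (s'^2*(‖g‖^2 + 2*⟪q, g⟫ + ‖q‖^2)
        + 2*γ*s'*((1 - γ/s^2)*(⟪g, d⟫ + ⟪q, d⟫) - s⁻¹*(‖g‖^2 + ⟪q, g⟫)))*s^4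
      = s^4*s'^2*(‖g‖^2 + 2*⟪q, g⟫ + ‖q‖^2)
        + 2*γ*s'*(s^2*(s^2 - γ)*(⟪g, d⟫ + ⟪q, d⟫) - s^3*(‖g‖^2 + ⟪q, g⟫)) := by
        field_simp
    _ ≤ s^6*‖g‖^2 + 2*γ*s^5*⟪g, d⟫ + 2000*γ^3*R^2*s^3 := key
    _ = (s^2*‖g‖^2 + 2*γ*s*⟪g, d⟫ + 2000*γ^3*R^2/s)*s^4 := by
        field_simp

set_option maxHeartbeats 1000000 in
private lemma anchored_decay {H : Type*} [NormedAddCommGroup H] [InnerProductSpace ℝ H]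
    (G : H → H)
    (hmono : ∀ z w : H, 0 ≤ ⟪G z - G w, z - w⟫)
    (hlip : ∀ z w : H, ‖G z - G w‖ ≤ ‖z - w‖)
    (zstar : H) (hzstar : G zstar = 0)
    (γ : ℝ) (hγ : 2 ≤ γ)
    (z : ℕ → H)
    (hstep : ∀ t : ℕ, z (t + 1) = z t - (Real.sqrt ((t : ℝ) + γ))⁻¹ • G (z t)
      + (γ / ((t : ℝ) + γ)) • (z 0 - z t)) :
    ∀ t : ℕ, ‖G (z t)‖^2 ≤ 5000*γ^3*‖z 0 - zstar‖^2 / Real.sqrt ((t : ℝ) + γ) := by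
  have hR0 : 0 ≤ ‖z 0 - zstar‖ := norm_nonneg _
  set R := ‖z 0 - zstar‖ with hRdef
  have hγ0 : (0:ℝ) < γ := by linarith
  have hb := anchored_bound G hmono hlip zstar hzstar γ hγ z hstep
  -- pointwise bounds used repeatedly
  have hgn : ∀ t : ℕ, ‖G (z t)‖ ≤ 8*R := by
    intro t
    have h1 := hlip (z t) zstar
    rw [hzstar, sub_zero] at h1
    exact h1.trans (hb t)
  have hPabs : ∀ t : ℕ, |⟪G (z t), z t - z 0⟫| ≤ 72*R^2 := by
    intro t
    have hd9 : ‖z t - z 0‖ ≤ 9*R := by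
      have he : z t - z 0 = (z t - zstar) - (z 0 - zstar) := by abel
      rw [he]
      calc ‖(z t - zstar) - (z 0 - zstar)‖ ≤ ‖z t - zstar‖ + ‖z 0 - zstar‖ := norm_sub_le _ _
        _ ≤ 8*R + R := by have := hb t; rw [← hRdef]; linarith
        _ = 9*R := by ring
    calc |⟪G (z t), z t - z 0⟫| ≤ ‖G (z t)‖*‖z t - z 0‖ := abs_real_inner_le_norm _ _
      _ ≤ (8*R)*(9*R) := mul_le_mul (hgn t) hd9 (norm_nonneg _) (by linarith)
      _ = 72*R^2 := by ring
  -- sqrt facts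
  have hsfacts : ∀ t : ℕ, 1 ≤ Real.sqrt ((t : ℝ) + γ) ∧ (Real.sqrt ((t:ℝ)+γ))^2 = (t:ℝ)+γ := by
    intro t
    have ht0 : (0:ℝ) ≤ (t:ℝ) := Nat.cast_nonneg t
    have h2 : (Real.sqrt ((t:ℝ)+γ))^2 = (t:ℝ)+γ := Real.sq_sqrt (by linarith)
    constructor
    · nlinarith [Real.sqrt_nonneg ((t:ℝ)+γ)]
    · exact h2
  -- potential bound by induction
  have hV : ∀ t : ℕ, ((t:ℝ)+γ)*‖G (z t)‖^2 + 2*γ*Real.sqrt ((t:ℝ)+γ)*⟪G (z t), z t - z 0⟫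
      ≤ 64*γ*R^2 + 4000*γ^3*R^2*Real.sqrt ((t:ℝ)+γ-1) := by
    intro t
    induction t with
    | zero =>
      have hg0 : ‖G (z 0)‖^2 ≤ 64*R^2 := by nlinarith [hgn 0, norm_nonneg (G (z 0))]
      have hz00 : z 0 - z 0 = 0 := by abel
      rw [Nat.cast_zero]
      rw [hz00, inner_zero_right]
      have hsq : (0:ℝ) ≤ Real.sqrt (0 + γ - 1) := Real.sqrt_nonneg _
      have : (0:ℝ)+γ = γ := by ring
      nlinarith [mul_le_mul_of_nonneg_left hg0 hγ0.le,
        mul_nonneg (by positivity : (0:ℝ) ≤ 4000*γ^3*R^2) hsq]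
    | succ t ih =>
      have hstep1 := anchored_step G hmono hlip zstar hzstar γ hγ z hstep hb t
      have ht0 : (0:ℝ) ≤ (t:ℝ) := Nat.cast_nonneg t
      -- slack comparison : 2000γ³R²/√(t+γ) ≤ 4000γ³R²(√(t+γ) - √(t+γ-1))
      have hτ2 : (2:ℝ) ≤ (t : ℝ) + γ := by linarith
      set b := Real.sqrt ((t:ℝ)+γ) with hbdef
      set a := Real.sqrt ((t:ℝ)+γ-1) with hadef
      have hb2 : b^2 = (t:ℝ)+γ := (hsfacts t).2
      have hb1 : 1 ≤ b := (hsfacts t).1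
      have ha2 : a^2 = (t:ℝ)+γ-1 := Real.sq_sqrt (by linarith)
      have ha0 : 0 ≤ a := Real.sqrt_nonneg _
      have hab : a ≤ b := Real.sqrt_le_sqrt (by linarith)
      have hkey : 1 ≤ 2*b*(b-a) := by nlinarith [sq_nonneg (a-b)]
      have hslack : 2000*γ^3*R^2/b ≤ 4000*γ^3*R^2*(b-a) := by
        rw [div_le_iff₀ (by linarith : (0:ℝ) < b)]
        have hc : (0:ℝ) ≤ 2000*γ^3*R^2 := by positivity
        nlinarith [mul_le_mul_of_nonneg_left hkey hc]
      have hcast : ((t+1 : ℕ) : ℝ) = (t:ℝ) + 1 := by push_cast; ring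
      rw [hcast]
      have hgoal2 : ((t:ℝ)+1+γ-1) = (t:ℝ)+γ := by ring
      rw [show (t:ℝ)+1+γ-1 = (t:ℝ)+γ from hgoal2]
      calc ((t:ℝ)+1+γ)*‖G (z (t+1))‖^2 + 2*γ*Real.sqrt ((t:ℝ)+1+γ)*⟪G (z (t+1)), z (t+1) - z 0⟫
          ≤ ((t:ℝ)+γ)*‖G (z t)‖^2 + 2*γ*b*⟪G (z t), z t - z 0⟫ + 2000*γ^3*R^2/b := hstep1
        _ ≤ 64*γ*R^2 + 4000*γ^3*R^2*a + 4000*γ^3*R^2*(b-a) := by linarith [ih, hslack]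
        _ = 64*γ*R^2 + 4000*γ^3*R^2*b := by ring
  -- conclude
  intro t
  set b := Real.sqrt ((t:ℝ)+γ) with hbdef
  have hb2 : b^2 = (t:ℝ)+γ := (hsfacts t).2
  have hb1 : 1 ≤ b := (hsfacts t).1
  have hb0 : (0:ℝ) < b := by linarith
  have hVt := hV t
  have hP := hPabs t
  have hPl : -(72*R^2) ≤ ⟪G (z t), z t - z 0⟫ := (abs_le.mp hP).1
  have ha : Real.sqrt ((t:ℝ)+γ-1) ≤ b := Real.sqrt_le_sqrt (by linarith)
  have h1 : ((t:ℝ)+γ)*‖G (z t)‖^2 ≤ 64*γ*R^2 + 4000*γ^3*R^2*b + 144*γ*R^2*b := by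
    have h2 : 2*γ*b*⟪G (z t), z t - z 0⟫ ≥ -(144*γ*R^2*b) := by
      nlinarith [mul_le_mul_of_nonneg_left hPl (by positivity : (0:ℝ) ≤ 2*γ*b)]
    have h3 : 4000*γ^3*R^2*Real.sqrt ((t:ℝ)+γ-1) ≤ 4000*γ^3*R^2*b :=
      mul_le_mul_of_nonneg_left ha (by positivity)
    linarith
  have h4 : ((t:ℝ)+γ)*‖G (z t)‖^2 ≤ 5000*γ^3*R^2*b := by
    have g1 : 64*γ*R^2 ≤ 64*γ*R^2*b := by
      nlinarith [mul_le_mul_of_nonneg_left hb1 (by positivity : (0:ℝ) ≤ 64*γ*R^2)]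
    have g2 : (4:ℝ) ≤ γ^2 := by nlinarith
    have g3 : 64*γ*R^2*b + 144*γ*R^2*b ≤ 1000*γ^3*R^2*b := by
      nlinarith [mul_nonneg (mul_nonneg (mul_nonneg (by linarith : (0:ℝ) ≤ γ)
        (sq_nonneg R)) hb0.le) (by linarith : (0:ℝ) ≤ γ^2 - 4)]
    linarith
  rw [le_div_iff₀ hb0]
  refine le_of_mul_le_mul_right ?_ hb0
  calc ‖G (z t)‖^2 * b * b = ((t:ℝ)+γ) * ‖G (z t)‖^2 := by rw [← hb2]; ring
    _ ≤ 5000*γ^3*R^2*b := h4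

/-- **Convergence of the squared gradient norms to zero for Anchored GDA.** -/
theorem anchored_gda_gradient_tendsto_zero
    {H : Type*} [NormedAddCommGroup H] [InnerProductSpace ℝ H]
    (G : H → H) (K : ℝ) (hK : 0 < K)
    (hmono : ∀ z w : H, 0 ≤ ⟪G z - G w, z - w⟫)
    (hlip : ∀ z w : H, ‖G z - G w‖ ≤ K * ‖z - w‖)
    (zstar : H) (hzstar : G zstar = 0)
    (γ : ℝ) (hγ : 2 ≤ γ)
    (α β : ℕ → ℝ)
    (hα : ∀ t : ℕ, α t = 1 / (K * Real.sqrt ((t : ℝ) + γ)))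
    (hβ : ∀ t : ℕ, β t = γ / ((t : ℝ) + γ))
    (z : ℕ → H)
    (hstep : ∀ t : ℕ, z (t + 1) = z t - α t • G (z t) + β t • (z 0 - z t)) :
    Tendsto (fun t : ℕ => ‖G (z t)‖ ^ 2) atTop (nhds 0) := by
  set G' : H → H := fun x => K⁻¹ • G x with hG'def
  have hKne : K ≠ 0 := ne_of_gt hK
  have hG'mono : ∀ a b : H, 0 ≤ ⟪G' a - G' b, a - b⟫ := by
    intro a b
    have he : G' a - G' b = K⁻¹ • (G a - G b) := by rw [hG'def]; simp [smul_sub]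
    rw [he, real_inner_smul_left]
    exact mul_nonneg (by positivity) (hmono a b)
  have hG'lip : ∀ a b : H, ‖G' a - G' b‖ ≤ ‖a - b‖ := by
    intro a b
    have he : G' a - G' b = K⁻¹ • (G a - G b) := by rw [hG'def]; simp [smul_sub]
    rw [he, norm_smul, Real.norm_eq_abs, abs_of_nonneg (by positivity : (0:ℝ) ≤ K⁻¹)]
    calc K⁻¹ * ‖G a - G b‖ ≤ K⁻¹ * (K * ‖a - b‖) := by
          exact mul_le_mul_of_nonneg_left (hlip a b) (by positivity)
      _ = ‖a - b‖ := by field_simp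
  have hG'zstar : G' zstar = 0 := by rw [hG'def]; simp [hzstar]
  have hG'step : ∀ t : ℕ, z (t + 1) = z t - (Real.sqrt ((t : ℝ) + γ))⁻¹ • G' (z t)
      + (γ / ((t : ℝ) + γ)) • (z 0 - z t) := by
    intro t
    rw [hstep t, hα t, hβ t]
    congr 2
    rw [hG'def]
    simp only [smul_smul]
    congr 1
    rw [one_div, mul_inv_rev]
  have hdecay := anchored_decay G' hG'mono hG'lip zstar hG'zstar γ hγ z hG'step
  set C := 5000*γ^3*‖z 0 - zstar‖^2 with hCdef
  have hC0 : 0 ≤ C := by positivity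
  have hnorm : ∀ t : ℕ, ‖G (z t)‖^2 = K^2 * ‖G' (z t)‖^2 := by
    intro t
    rw [hG'def]
    simp only []
    rw [norm_smul, Real.norm_eq_abs, abs_of_nonneg (by positivity : (0:ℝ) ≤ K⁻¹), mul_pow]
    field_simp
  have hbound : ∀ t : ℕ, ‖G (z t)‖^2 ≤ K^2 * C * (Real.sqrt ((t:ℝ)+γ))⁻¹ := by
    intro t
    rw [hnorm t]
    have := hdecay t
    rw [div_eq_mul_inv] at this
    calc K^2 * ‖G' (z t)‖^2 ≤ K^2 * (C * (Real.sqrt ((t:ℝ)+γ))⁻¹) :=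
          mul_le_mul_of_nonneg_left this (by positivity)
      _ = K^2 * C * (Real.sqrt ((t:ℝ)+γ))⁻¹ := by ring
  -- the comparison sequence tends to 0
  have h1 : Tendsto (fun t : ℕ => (t:ℝ) + γ) atTop atTop :=
    tendsto_atTop_add_const_right _ γ tendsto_natCast_atTop_atTop
  have h2 : Tendsto (fun t : ℕ => Real.sqrt ((t:ℝ) + γ)) atTop atTop := by
    refine tendsto_atTop_atTop.mpr fun M => ?_
    obtain ⟨n, hn⟩ := exists_nat_ge (M^2)
    refine ⟨n, fun t ht => ?_⟩
    rcases le_or_gt M 0 with hM | hM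
    · exact hM.trans (Real.sqrt_nonneg _)
    · rw [show M = Real.sqrt (M^2) by rw [Real.sqrt_sq hM.le]]
      apply Real.sqrt_le_sqrt
      have h1 : (n:ℝ) ≤ (t:ℝ) := Nat.cast_le.mpr ht
      linarith
  have h3 : Tendsto (fun t : ℕ => (Real.sqrt ((t:ℝ) + γ))⁻¹) atTop (nhds 0) :=
    h2.inv_tendsto_atTop
  have h4 : Tendsto (fun t : ℕ => K^2 * C * (Real.sqrt ((t:ℝ) + γ))⁻¹) atTop (nhds 0) := by
    have := h3.const_mul (K^2 * C)
    simpa using this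
  refine squeeze_zero (fun t => sq_nonneg _) hbound h4
end
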